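/- arXiv:2111.14230 — 8 statements merged into one kernel-verified Lean document; each statement's English description precedes it below -/
import Mathlib

section
/- (Balls lemma) Let x_1, …, x_N be N points in ℝ^p, let ε > 0 and 0 < κ ≤ 1/2. Then there exist δ > 0 and a nonempty subset Q of {1, …, N} such that: (a) ε ≤ δ < (κ/2)^{-N} ε; (b) the union of the closed balls of radius ε centered at the x_i (i = 1, …, N) is contained in the union of the closed balls of radius δ centered at the x_j with j ∈ Q; (c) for all i ≠ j in Q, |x_i − x_j| ≥ κ^{-1} δ. -/
theorem balls_aux {p N : ℕ} (x : Fin N → EuclideanSpace ℝ (Fin p)) (ε κ : ℝ)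
    (hε : 0 < ε) (hκ : 0 < κ) (hκ1 : κ ≤ 1) :
    ∀ n : ℕ, ∀ Q : Finset (Fin N), Q.card ≤ n → Q.Nonempty → ∀ δ : ℝ, ε ≤ δ →
    ((⋃ i : Fin N, Metric.closedBall (x i) ε) ⊆ ⋃ j ∈ Q, Metric.closedBall (x j) δ) →
    ∃ (δ' : ℝ) (Q' : Finset (Fin N)), Q' ⊆ Q ∧ Q'.Nonempty ∧ δ ≤ δ' ∧
      δ' ≤ (2 / κ) ^ (Q.card - Q'.card) * δ ∧
      ((⋃ i : Fin N, Metric.closedBall (x i) ε) ⊆ ⋃ j ∈ Q', Metric.closedBall (x j) δ') ∧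
      (∀ i ∈ Q', ∀ j ∈ Q', i ≠ j → κ⁻¹ * δ' ≤ dist (x i) (x j)) := by
  intro n
  induction n with
  | zero =>
    intro Q hQ hne
    exact absurd (Finset.card_pos.mpr hne) (by omega)
  | succ n ih =>
    intro Q hQcard hQne δ hεδ hcov
    by_cases hsep : ∀ i ∈ Q, ∀ j ∈ Q, i ≠ j → κ⁻¹ * δ ≤ dist (x i) (x j)
    · exact ⟨δ, Q, subset_rfl, hQne, le_refl _, by simp, hcov, hsep⟩
    · push_neg at hsep
      obtain ⟨i, hi, j, hj, hij, hlt⟩ := hsep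
      have hδpos : 0 < δ := lt_of_lt_of_le hε hεδ
      have hc1 : (1 : ℝ) ≤ 2 / κ := (one_le_div hκ).mpr (by linarith)
      have hjQ₁ : j ∈ Q.erase i := Finset.mem_erase.mpr ⟨hij.symm, hj⟩
      have hcard₁ : (Q.erase i).card = Q.card - 1 := Finset.card_erase_of_mem hi
      have hQpos : 0 < Q.card := Finset.card_pos.mpr hQne
      have hεδ' : ε ≤ (2 / κ) * δ := hεδ.trans (le_mul_of_one_le_left hδpos.le hc1)
      have hcov' : (⋃ i : Fin N, Metric.closedBall (x i) ε) ⊆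
          ⋃ k ∈ Q.erase i, Metric.closedBall (x k) ((2 / κ) * δ) := by
        intro y hy
        have := hcov hy
        rw [Set.mem_iUnion₂] at this
        obtain ⟨k, hk, hyk⟩ := this
        rw [Set.mem_iUnion₂]
        by_cases hki : k = i
        · refine ⟨j, hjQ₁, ?_⟩
          rw [Metric.mem_closedBall] at hyk ⊢
          have h1 : dist y (x j) ≤ dist y (x i) + dist (x i) (x j) := dist_triangle _ _ _
          have h2 : dist (x i) (x j) ≤ κ⁻¹ * δ := hlt.le
          have h3 : δ + κ⁻¹ * δ ≤ (2 / κ) * δ := by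
            have : (1 : ℝ) + κ⁻¹ ≤ 2 / κ := by
              rw [div_eq_mul_inv]
              have hκi : (1 : ℝ) ≤ κ⁻¹ := one_le_inv₀ hκ |>.mpr hκ1
              nlinarith
            nlinarith
          subst hki
          linarith
        · refine ⟨k, Finset.mem_erase.mpr ⟨hki, hk⟩, ?_⟩
          rw [Metric.mem_closedBall] at hyk ⊢
          have : δ ≤ (2 / κ) * δ := le_mul_of_one_le_left hδpos.le hc1
          linarith
      obtain ⟨δ', Q', hsub, hne, hle, hbound, hcovf, hsepf⟩ :=
        ih (Q.erase i) (by omega) ⟨j, hjQ₁⟩ ((2 / κ) * δ) hεδ' hcov'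
      refine ⟨δ', Q', hsub.trans (Finset.erase_subset _ _), hne,
        (le_mul_of_one_le_left hδpos.le hc1).trans hle, ?_, hcovf, hsepf⟩
      have hQ'card : Q'.card ≤ (Q.erase i).card := Finset.card_le_card hsub
      have hexp : (Q.erase i).card - Q'.card + 1 = Q.card - Q'.card := by omega
      calc δ' ≤ (2 / κ) ^ ((Q.erase i).card - Q'.card) * ((2 / κ) * δ) := hbound
        _ = (2 / κ) ^ ((Q.erase i).card - Q'.card + 1) * δ := by ring
        _ = (2 / κ) ^ (Q.card - Q'.card) * δ := by rw [hexp]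

/-- **Balls lemma.** Let `x₁, …, x_N` be `N ≥ 1` points in `ℝ^p`, let `ε > 0` and
`0 < κ ≤ 1/2`. Then there exist `δ > 0` and a nonempty subset `Q` of `{1, …, N}` such that
`ε ≤ δ < (κ/2)^{-N} ε`, the union of the closed balls of radius `ε` centered at the `x i`
is contained in the union of the closed balls of radius `δ` centered at the `x j`, `j ∈ Q`,
and any two distinct points indexed by `Q` are at distance at least `κ⁻¹ δ`. -/
theorem balls_lemma (p N : ℕ) (hN : 1 ≤ N)
    (x : Fin N → EuclideanSpace ℝ (Fin p)) (ε κ : ℝ)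
    (hε : 0 < ε) (hκ : 0 < κ) (hκ2 : κ ≤ 1 / 2) :
    ∃ (δ : ℝ) (Q : Finset (Fin N)), 0 < δ ∧ Q.Nonempty ∧
      ε ≤ δ ∧ δ < ((κ / 2) ^ N)⁻¹ * ε ∧
      ((⋃ i : Fin N, Metric.closedBall (x i) ε) ⊆
        ⋃ j ∈ Q, Metric.closedBall (x j) δ) ∧
      (∀ i ∈ Q, ∀ j ∈ Q, i ≠ j → κ⁻¹ * δ ≤ dist (x i) (x j)) := by
  have hκ1 : κ ≤ 1 := by linarith
  have huniv : (Finset.univ : Finset (Fin N)).Nonempty := by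
    refine ⟨⟨0, by omega⟩, Finset.mem_univ _⟩
  have hcov0 : (⋃ i : Fin N, Metric.closedBall (x i) ε) ⊆
      ⋃ j ∈ (Finset.univ : Finset (Fin N)), Metric.closedBall (x j) ε := by
    intro y hy
    rw [Set.mem_iUnion] at hy
    obtain ⟨k, hk⟩ := hy
    rw [Set.mem_iUnion₂]
    exact ⟨k, Finset.mem_univ _, hk⟩
  obtain ⟨δ, Q, hsub, hne, hle, hbound, hcov, hsep⟩ :=
    balls_aux x ε κ hε hκ hκ1 N Finset.univ (by simp) huniv ε le_rfl hcov0
  refine ⟨δ, Q, lt_of_lt_of_le hε hle, hne, hle, ?_, hcov, hsep⟩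
  have hc1 : (1 : ℝ) < 2 / κ := (one_lt_div hκ).mpr (by linarith)
  have hQpos : 0 < Q.card := Finset.card_pos.mpr hne
  have hcard : (Finset.univ : Finset (Fin N)).card = N := by simp
  have hexp : (Finset.univ : Finset (Fin N)).card - Q.card < N := by omega
  have hpow : (2 / κ) ^ ((Finset.univ : Finset (Fin N)).card - Q.card) < (2 / κ) ^ N :=
    pow_lt_pow_right₀ hc1 hexp
  have hkey : ((κ / 2) ^ N)⁻¹ = (2 / κ) ^ N := by
    rw [← inv_pow, inv_div]
  rw [hkey]
  calc δ ≤ (2 / κ) ^ ((Finset.univ : Finset (Fin N)).card - Q.card) * ε := hbound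
    _ < (2 / κ) ^ N * ε := by exact mul_lt_mul_of_pos_right hpow hε
end

section
/- Let x_1, …, x_N be N points in ℝ^p. Then for every κ ∈ (0,1) and every d > 0 there exist δ with (1/2)(κ/8)^N d ≤ δ < d and a partition 𝒫 of the index set {1, …, N} such that: (a) for every block P ∈ 𝒫 and all i, j ∈ P, |x_i − x_j| ≤ δ; and (b) for all distinct blocks P ≠ P' in 𝒫, every i ∈ P and every j ∈ P', |x_i − x_j| ≥ κ^{-1} δ. -/
open Finset

private lemma cluster_aux (p N : ℕ) (x : Fin N → EuclideanSpace ℝ (Fin p)) (κ d : ℝ)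
    (hκ0 : 0 < κ) (hκ1 : κ < 1) (hd : 0 < d) :
    ∀ n : ℕ, ∀ (𝔓 : Finset (Finset (Fin N))) (δ : ℝ),
      𝔓.card ≤ n →
      (1 / 2) * (κ / 8) ^ N * d ≤ δ →
      δ * (4 / κ) ^ 𝔓.card ≤ (1 / 2) * (1 / 2) ^ N * d →
      (∀ P ∈ 𝔓, P.Nonempty) →
      (∀ i : Fin N, ∃! P, P ∈ 𝔓 ∧ i ∈ P) →
      (∀ P ∈ 𝔓, ∀ i ∈ P, ∀ j ∈ P, dist (x i) (x j) ≤ δ) →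
      ∃ (δ' : ℝ) (𝔔 : Finset (Finset (Fin N))),
        (1 / 2) * (κ / 8) ^ N * d ≤ δ' ∧ δ' < d ∧
        (∀ P ∈ 𝔔, P.Nonempty) ∧
        (∀ i : Fin N, ∃! P, P ∈ 𝔔 ∧ i ∈ P) ∧
        (∀ P ∈ 𝔔, ∀ i ∈ P, ∀ j ∈ P, dist (x i) (x j) ≤ δ') ∧
        (∀ P ∈ 𝔔, ∀ P' ∈ 𝔔, P ≠ P' → ∀ i ∈ P, ∀ j ∈ P',
          κ⁻¹ * δ' ≤ dist (x i) (x j)) := by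
  have h4κ : (1:ℝ) ≤ 4 / κ := by
    rw [le_div_iff₀ hκ0]; linarith
  intro n
  induction n with
  | zero =>
    intro 𝔓 δ hcard hlow hbound hne huniq hintra
    have h𝔓 : 𝔓 = ∅ := card_eq_zero.mp (Nat.le_zero.mp hcard)
    subst h𝔓
    have hδpos : 0 < δ := lt_of_lt_of_le (by positivity) hlow
    have hδd : δ < d := by
      simp only [card_empty, pow_zero, mul_one] at hbound
      have : ((1:ℝ)/2) ^ N ≤ 1 := pow_le_one₀ (by norm_num) (by norm_num)
      nlinarith
    exact ⟨δ, ∅, hlow, hδd, by simp, huniq, by simp, by simp⟩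
  | succ n ih =>
    intro 𝔓 δ hcard hlow hbound hne huniq hintra
    have hδpos : 0 < δ := lt_of_lt_of_le (by positivity) hlow
    have hδd : δ < d := by
      have h1 : δ ≤ δ * (4 / κ) ^ 𝔓.card :=
        le_mul_of_one_le_right hδpos.le (one_le_pow₀ h4κ)
      have h2 : ((1:ℝ)/2) ^ N ≤ 1 := pow_le_one₀ (by norm_num) (by norm_num)
      nlinarith
    by_cases hsep : ∀ P ∈ 𝔓, ∀ P' ∈ 𝔓, P ≠ P' → ∀ i ∈ P, ∀ j ∈ P',
        κ⁻¹ * δ ≤ dist (x i) (x j)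
    · exact ⟨δ, 𝔓, hlow, hδd, hne, huniq, hintra, hsep⟩
    · push_neg at hsep
      obtain ⟨P, hP, P', hP', hPP', i₀, hi₀, j₀, hj₀, hd0⟩ := hsep
      set Q : Finset (Fin N) := P ∪ P' with hQdef
      set 𝔔 : Finset (Finset (Fin N)) := insert Q ((𝔓.erase P).erase P') with h𝔔def
      set δ' : ℝ := 2 * δ + κ⁻¹ * δ with hδ'def
      have hκinv : (1:ℝ) ≤ κ⁻¹ := one_le_inv_iff₀.mpr ⟨hκ0, hκ1.le⟩
      have hδδ' : δ ≤ δ' := by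
        have : 0 ≤ κ⁻¹ * δ := by positivity
        simp only [hδ'def]; linarith
      have hdisj : ∀ A ∈ 𝔓, ∀ B ∈ 𝔓, A ≠ B → ∀ k, k ∈ A → k ∈ B → False := by
        intro A hA B hB hAB k hkA hkB
        obtain ⟨U, hU, hUuniq⟩ := huniq k
        exact hAB ((hUuniq A ⟨hA, hkA⟩).trans (hUuniq B ⟨hB, hkB⟩).symm)
      have hP'erase : P' ∈ 𝔓.erase P := mem_erase.mpr ⟨hPP'.symm, hP'⟩
      have hQnotmem : Q ∉ (𝔓.erase P).erase P' := by
        intro hQ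
        have hQ𝔓 : Q ∈ 𝔓 := mem_of_mem_erase (mem_of_mem_erase hQ)
        have hQP : Q ≠ P := ne_of_mem_erase (mem_of_mem_erase hQ)
        exact hdisj Q hQ𝔓 P hP hQP i₀ (mem_union_left _ hi₀) hi₀
      have hcard2 : 2 ≤ 𝔓.card := by
        have := Finset.one_lt_card.mpr ⟨P, hP, P', hP', hPP'⟩
        omega
      have hcQ : 𝔔.card = 𝔓.card - 1 := by
        rw [h𝔔def, card_insert_of_notMem hQnotmem, card_erase_of_mem hP'erase,
          card_erase_of_mem hP]
        omega
      have hcard' : 𝔔.card ≤ n := by omega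
      have hlow' : (1 / 2) * (κ / 8) ^ N * d ≤ δ' := hlow.trans hδδ'
      have hbound' : δ' * (4 / κ) ^ 𝔔.card ≤ (1 / 2) * (1 / 2) ^ N * d := by
        have hstep : δ' ≤ (4 / κ) * δ := by
          have hκκ : κ * κ⁻¹ = 1 := mul_inv_cancel₀ hκ0.ne'
          rw [hδ'def, div_eq_mul_inv]
          nlinarith [mul_pos hκ0 hδpos]
        calc δ' * (4 / κ) ^ 𝔔.card ≤ ((4 / κ) * δ) * (4 / κ) ^ 𝔔.card := by
              exact mul_le_mul_of_nonneg_right hstep (pow_nonneg (by positivity) _)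
          _ = δ * (4 / κ) ^ (𝔔.card + 1) := by ring
          _ = δ * (4 / κ) ^ 𝔓.card := by rw [show 𝔔.card + 1 = 𝔓.card from by omega]
          _ ≤ _ := hbound
      have hne' : ∀ R ∈ 𝔔, R.Nonempty := by
        intro R hR
        rcases mem_insert.mp hR with h | h
        · exact h ▸ ⟨i₀, mem_union_left _ hi₀⟩
        · exact hne R (mem_of_mem_erase (mem_of_mem_erase h))
      have huniq' : ∀ i : Fin N, ∃! R, R ∈ 𝔔 ∧ i ∈ R := by
        intro i
        obtain ⟨U, ⟨hU𝔓, hiU⟩, hUuniq⟩ := huniq i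
        by_cases hUP : U = P ∨ U = P'
        · refine ⟨Q, ⟨mem_insert_self _ _, ?_⟩, ?_⟩
          · rcases hUP with h | h
            · exact mem_union_left _ (h ▸ hiU)
            · exact mem_union_right _ (h ▸ hiU)
          · rintro R ⟨hR, hiR⟩
            rcases mem_insert.mp hR with h | h
            · exact h
            · exfalso
              have hR𝔓 : R ∈ 𝔓 := mem_of_mem_erase (mem_of_mem_erase h)
              have hRP : R ≠ P := ne_of_mem_erase (mem_of_mem_erase h)
              have hRP' : R ≠ P' := ne_of_mem_erase h
              have := hUuniq R ⟨hR𝔓, hiR⟩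
              rcases hUP with h' | h'
              · exact hRP (this.trans h')
              · exact hRP' (this.trans h')
        · push_neg at hUP
          refine ⟨U, ⟨mem_insert_of_mem (mem_erase.mpr ⟨hUP.2, mem_erase.mpr ⟨hUP.1, hU𝔓⟩⟩),
            hiU⟩, ?_⟩
          rintro R ⟨hR, hiR⟩
          rcases mem_insert.mp hR with h | h
          · exfalso
            subst h
            rcases mem_union.mp hiR with h' | h'
            · exact hUP.1 (hUuniq P ⟨hP, h'⟩).symm
            · exact hUP.2 (hUuniq P' ⟨hP', h'⟩).symm
          · exact hUuniq R ⟨mem_of_mem_erase (mem_of_mem_erase h), hiR⟩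
      have hintra' : ∀ R ∈ 𝔔, ∀ i ∈ R, ∀ j ∈ R, dist (x i) (x j) ≤ δ' := by
        have key : ∀ i ∈ P, ∀ j ∈ P', dist (x i) (x j) ≤ δ' := by
          intro i hi j hj
          calc dist (x i) (x j) ≤ dist (x i) (x i₀) + dist (x i₀) (x j₀) + dist (x j₀) (x j) :=
                dist_triangle4 _ _ _ _
            _ ≤ δ + κ⁻¹ * δ + δ :=
                add_le_add (add_le_add (hintra P hP i hi i₀ hi₀) hd0.le)
                  (hintra P' hP' j₀ hj₀ j hj)
            _ = δ' := by rw [hδ'def]; ring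
        intro R hR i hi j hj
        rcases mem_insert.mp hR with h | h
        · subst h
          rcases mem_union.mp hi with hiP | hiP <;> rcases mem_union.mp hj with hjP | hjP
          · exact (hintra P hP i hiP j hjP).trans hδδ'
          · exact key i hiP j hjP
          · rw [dist_comm]; exact key j hjP i hiP
          · exact (hintra P' hP' i hiP j hjP).trans hδδ'
        · exact (hintra R (mem_of_mem_erase (mem_of_mem_erase h)) i hi j hj).trans hδδ'
      exact ih 𝔔 δ' hcard' hlow' hbound' hne' huniq' hintra'

/-- **Clusters at a given scale (corollary of the balls lemma).**
Let `x₁, …, x_N` be `N` points in `ℝ^p`. For every `κ ∈ (0,1)` and `d > 0` there exist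
`δ ∈ [½(κ/8)^N d, d)` and a partition `𝔓` of `{1, …, N}` such that points in a common block
are at distance at most `δ` and points in distinct blocks are at distance at least `κ⁻¹ δ`. -/
theorem cluster_partition (p N : ℕ)
    (x : Fin N → EuclideanSpace ℝ (Fin p)) (κ d : ℝ)
    (hκ : κ ∈ Set.Ioo (0:ℝ) 1) (hd : 0 < d) :
    ∃ (δ : ℝ) (𝔓 : Finset (Finset (Fin N))),
      (1 / 2) * (κ / 8) ^ N * d ≤ δ ∧ δ < d ∧
      (∀ P ∈ 𝔓, P.Nonempty) ∧
      (∀ i : Fin N, ∃! P, P ∈ 𝔓 ∧ i ∈ P) ∧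
      (∀ P ∈ 𝔓, ∀ i ∈ P, ∀ j ∈ P, dist (x i) (x j) ≤ δ) ∧
      (∀ P ∈ 𝔓, ∀ P' ∈ 𝔓, P ≠ P' → ∀ i ∈ P, ∀ j ∈ P',
        κ⁻¹ * δ ≤ dist (x i) (x j)) := by
  obtain ⟨hκ0, hκ1⟩ := hκ
  have h4κ : (1:ℝ) ≤ 4 / κ := by rw [le_div_iff₀ hκ0]; linarith
  set 𝔓₀ : Finset (Finset (Fin N)) :=
    (univ : Finset (Fin N)).image (fun i => ({i} : Finset (Fin N))) with h𝔓₀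
  have hcN : 𝔓₀.card ≤ N := by
    calc 𝔓₀.card ≤ (univ : Finset (Fin N)).card := card_image_le
      _ = N := by simp
  have hδ₀pos : (0:ℝ) < (1 / 2) * (κ / 8) ^ N * d := by positivity
  have hbound : (1 / 2) * (κ / 8) ^ N * d * (4 / κ) ^ 𝔓₀.card ≤ (1 / 2) * (1 / 2) ^ N * d := by
    have key : (κ / 8) ^ N * (4 / κ) ^ N = (1 / 2 : ℝ) ^ N := by
      rw [← mul_pow]
      congr 1
      field_simp
      ring
    calc (1 / 2) * (κ / 8) ^ N * d * (4 / κ) ^ 𝔓₀.card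
        ≤ (1 / 2) * (κ / 8) ^ N * d * (4 / κ) ^ N :=
          mul_le_mul_of_nonneg_left (pow_le_pow_right₀ h4κ hcN) hδ₀pos.le
      _ = (1 / 2) * ((κ / 8) ^ N * (4 / κ) ^ N) * d := by ring
      _ = (1 / 2) * (1 / 2) ^ N * d := by rw [key]
  have hne : ∀ P ∈ 𝔓₀, P.Nonempty := by
    intro P hP
    obtain ⟨i, _, rfl⟩ := mem_image.mp hP
    exact singleton_nonempty i
  have huniq : ∀ i : Fin N, ∃! P, P ∈ 𝔓₀ ∧ i ∈ P := by
    intro i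
    refine ⟨{i}, ⟨mem_image_of_mem _ (mem_univ i), mem_singleton_self i⟩, ?_⟩
    rintro R ⟨hR, hiR⟩
    obtain ⟨j, _, rfl⟩ := mem_image.mp hR
    rw [mem_singleton] at hiR
    rw [hiR]
  have hintra : ∀ P ∈ 𝔓₀, ∀ i ∈ P, ∀ j ∈ P, dist (x i) (x j) ≤ (1 / 2) * (κ / 8) ^ N * d := by
    intro P hP i hi j hj
    obtain ⟨k, _, rfl⟩ := mem_image.mp hP
    rw [mem_singleton] at hi hj
    rw [hi, hj, dist_self]
    exact hδ₀pos.le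
  exact cluster_aux p N x κ d hκ0 hκ1 hd N 𝔓₀ ((1 / 2) * (κ / 8) ^ N * d)
    hcN le_rfl hbound hne huniq hintra
end

section
/- (Quasi-preservation of the centers of vorticity of clusters) Let α ≥ 0, let a_1, …, a_N be nonzero reals, and let (x_1, …, x_N) be a solution of the α-point-vortex system on [0,T). Then there exists a constant C > 0 depending only on a_1, …, a_N such that for every nonempty subset P of {1, …, N} with ∑_{i∈P} a_i ≠ 0, the barycenter B_P(t) := (∑_{i∈P} a_i)^{-1} ∑_{i∈P} a_i x_i(t) is differentiable and satisfies, for all t ∈ [0,T), |B_P'(t)| ≤ C ∑_{i∈P} ∑_{j∉P} 1 / |x_i(t) − x_j(t)|^α. -/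
open Finset

/-!
Multiplying the equation of motion of vortex `i` by `a i` writes `a i • x i'` as a sum of pair
terms `a i a j (x i − x j)^⊥ / |x i − x j|^(α+1)`, which are antisymmetric in `(i, j)`. Summing over
`i ∈ P`, the interactions inside the cluster cancel, so only pairs `i ∈ P`, `j ∉ P` survive, each of
norm `|a i a j| / |x i − x j|^α`. Dividing by `|∑_{i∈P} a i|` costs a factor bounded by the sum of
`|∑_{i∈Q} a i|⁻¹` over all clusters `Q`, which depends only on the intensities.
-/

theorem Finset.sum_sum_eq_zero_of_antisymm {ι M : Type*} [AddCommGroup M] [IsAddTorsionFree M]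
    (s : Finset ι) {f : ι → ι → M} (hf : ∀ i j, f j i = -f i j) :
    ∑ i ∈ s, ∑ j ∈ s, f i j = 0 := by
  rw [← self_eq_neg]
  nth_rw 1 [sum_comm]
  simp only [← sum_neg_distrib, ← hf]

/-- The product of `a i` with the velocity that vortex `j` induces on vortex `i`. -/
noncomputable def vortexInteraction {ι : Type*} (α : ℝ) (a : ι → ℝ) (z : ι → ℂ) (i j : ι) : ℂ :=
  (a i * a j / ‖z i - z j‖ ^ (α + 1)) • (Complex.I * (z i - z j))

section VortexInteraction

variable {ι : Type*} (α : ℝ) (a : ι → ℝ) (z : ι → ℂ)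

theorem vortexInteraction_swap (i j : ι) :
    vortexInteraction α a z j i = -vortexInteraction α a z i j := by
  rw [vortexInteraction, vortexInteraction, norm_sub_rev, mul_comm (a j), ← smul_neg, ← mul_neg,
    neg_sub]

theorem smul_vortexVelocity [Fintype ι] [DecidableEq ι] (i : ι) :
    a i • ∑ j ∈ univ.filter (fun j => j ≠ i),
        (a j / ‖z i - z j‖ ^ (α + 1)) • (Complex.I * (z i - z j)) =
      ∑ j, vortexInteraction α a z i j := by
  rw [smul_sum, sum_filter_of_ne]
  · simp only [smul_smul, mul_div_assoc, vortexInteraction]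
  · rintro j - hj rfl
    simp at hj

theorem sum_sum_vortexInteraction_eq_sum_compl [Fintype ι] [DecidableEq ι] (P : Finset ι) :
    ∑ i ∈ P, ∑ j, vortexInteraction α a z i j = ∑ i ∈ P, ∑ j ∈ Pᶜ, vortexInteraction α a z i j := by
  simp only [← sum_add_sum_compl P (vortexInteraction α a z _), sum_add_distrib,
    sum_sum_eq_zero_of_antisymm P (vortexInteraction_swap α a z), zero_add]

theorem norm_vortexInteraction {i j : ι} (h : z i ≠ z j) :
    ‖vortexInteraction α a z i j‖ = |a i * a j| / ‖z i - z j‖ ^ α := by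
  have hd : ‖z i - z j‖ ≠ 0 := norm_ne_zero_iff.mpr (sub_ne_zero.mpr h)
  rw [vortexInteraction, norm_smul, norm_mul, Complex.norm_I, one_mul, Real.norm_eq_abs, abs_div,
    abs_of_nonneg (Real.rpow_nonneg (norm_nonneg (z i - z j)) _), Real.rpow_add_one hd]
  field_simp

theorem norm_sum_sum_vortexInteraction_compl_le [Fintype ι] [DecidableEq ι]
    (hz : Function.Injective z) (P : Finset ι) :
    ‖∑ i ∈ P, ∑ j ∈ Pᶜ, vortexInteraction α a z i j‖ ≤
      ‖a‖ ^ 2 * ∑ i ∈ P, ∑ j ∈ Pᶜ, 1 / ‖z i - z j‖ ^ α := by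
  calc ‖∑ i ∈ P, ∑ j ∈ Pᶜ, vortexInteraction α a z i j‖
      ≤ ∑ i ∈ P, ∑ j ∈ Pᶜ, ‖vortexInteraction α a z i j‖ :=
        (norm_sum_le _ _).trans (sum_le_sum fun i _ => norm_sum_le _ _)
    _ ≤ ∑ i ∈ P, ∑ j ∈ Pᶜ, ‖a‖ ^ 2 * (1 / ‖z i - z j‖ ^ α) := by
        gcongr with i hi j hj
        have hij : i ≠ j := by rintro rfl; exact mem_compl.mp hj hi
        rw [norm_vortexInteraction α a z (hz.ne hij), div_eq_mul_one_div, abs_mul, sq]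
        gcongr <;> exact norm_le_pi_norm a _
    _ = ‖a‖ ^ 2 * ∑ i ∈ P, ∑ j ∈ Pᶜ, 1 / ‖z i - z j‖ ^ α := by simp only [mul_sum]

end VortexInteraction

theorem quasi_preservation_barycenter_general (N : ℕ) (α : ℝ)
    (a : Fin N → ℝ) :
    ∃ C > 0, ∀ T : ℝ, 0 < T → ∀ x : Fin N → ℝ → ℂ,
      (∀ i j, i ≠ j → ∀ t ∈ Set.Ico (0:ℝ) T, x i t ≠ x j t) →
      (∀ i, ∀ t ∈ Set.Ico (0:ℝ) T,
        HasDerivWithinAt (x i)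
          (∑ j ∈ Finset.univ.filter (fun j => j ≠ i),
            (a j / ‖x i t - x j t‖ ^ (α + 1)) • (Complex.I * (x i t - x j t)))
          (Set.Ico (0:ℝ) T) t) →
      ∀ P : Finset (Fin N), P.Nonempty → (∑ i ∈ P, a i) ≠ 0 →
      ∀ t ∈ Set.Ico (0:ℝ) T, ∃ v : ℂ,
        HasDerivWithinAt (fun s => (∑ i ∈ P, a i)⁻¹ • ∑ i ∈ P, a i • x i s) v
          (Set.Ico (0:ℝ) T) t ∧
        ‖v‖ ≤ C * ∑ i ∈ P, ∑ j ∈ Pᶜ, 1 / ‖x i t - x j t‖ ^ α := by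
  set S : ℝ := ∑ Q : Finset (Fin N), |∑ i ∈ Q, a i|⁻¹
  have hS : 0 ≤ S := sum_nonneg fun _ _ => by positivity
  refine ⟨S * ‖a‖ ^ 2 + 1, by positivity, fun T _ x hsep hderiv P _ _ t ht => ?_⟩
  set z : Fin N → ℂ := fun i => x i t
  have hz : Function.Injective z := fun i j h => by_contra fun hij => hsep i j hij t ht h
  refine ⟨(∑ i ∈ P, a i)⁻¹ • ∑ i ∈ P, ∑ j ∈ Pᶜ, vortexInteraction α a z i j, ?_, ?_⟩
  · rw [← sum_sum_vortexInteraction_eq_sum_compl]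
    refine .const_smul (∑ i ∈ P, a i)⁻¹ (HasDerivWithinAt.fun_sum fun i _ => ?_)
    rw [← smul_vortexVelocity]
    exact (hderiv i t ht).const_smul (a i)
  · have hinv : |∑ i ∈ P, a i|⁻¹ ≤ S :=
      single_le_sum (f := fun Q => |∑ i ∈ Q, a i|⁻¹) (fun _ _ => by positivity) (mem_univ P)
    have hsum : 0 ≤ ∑ i ∈ P, ∑ j ∈ Pᶜ, 1 / ‖z i - z j‖ ^ α := by positivity
    rw [norm_smul, norm_inv, Real.norm_eq_abs]
    calc |∑ i ∈ P, a i|⁻¹ * ‖∑ i ∈ P, ∑ j ∈ Pᶜ, vortexInteraction α a z i j‖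
        ≤ S * (‖a‖ ^ 2 * ∑ i ∈ P, ∑ j ∈ Pᶜ, 1 / ‖z i - z j‖ ^ α) :=
          mul_le_mul hinv (norm_sum_sum_vortexInteraction_compl_le α a z hz P) (norm_nonneg _) hS
      _ ≤ (S * ‖a‖ ^ 2 + 1) * ∑ i ∈ P, ∑ j ∈ Pᶜ, 1 / ‖z i - z j‖ ^ α := by
          rw [add_mul, one_mul, mul_assoc]
          exact le_add_of_nonneg_right hsum

/-- **Quasi-preservation of the centers of vorticity of clusters.**
Identifying `ℝ²` with `ℂ` (so `v^⊥ = I * v`), let `α ≥ 0` and let `a i` be nonzero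
intensities. There is a constant `C > 0` depending only on the intensities such that for every
solution of the `α`-point-vortex system on `[0,T)` and every nonempty cluster
`P ⊆ {1,…,N}` with `∑_{i∈P} a i ≠ 0`, the barycenter
`B_P(t) = (∑_{i∈P} a i)⁻¹ ∑_{i∈P} a i • x i t` is differentiable with
`‖B_P'(t)‖ ≤ C ∑_{i∈P} ∑_{j∉P} 1/‖x i t − x j t‖^α` for all `t ∈ [0,T)`. -/
theorem quasi_preservation_barycenter (N : ℕ) (α : ℝ) (hα : 0 ≤ α)
    (a : Fin N → ℝ) (ha : ∀ i, a i ≠ 0) :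
    ∃ C > 0, ∀ T : ℝ, 0 < T → ∀ x : Fin N → ℝ → ℂ,
      (∀ i j, i ≠ j → ∀ t ∈ Set.Ico (0:ℝ) T, x i t ≠ x j t) →
      (∀ i, ∀ t ∈ Set.Ico (0:ℝ) T,
        HasDerivWithinAt (x i)
          (∑ j ∈ Finset.univ.filter (fun j => j ≠ i),
            (a j / ‖x i t - x j t‖ ^ (α + 1)) • (Complex.I * (x i t - x j t)))
          (Set.Ico (0:ℝ) T) t) →
      ∀ P : Finset (Fin N), P.Nonempty → (∑ i ∈ P, a i) ≠ 0 →
      ∀ t ∈ Set.Ico (0:ℝ) T, ∃ v : ℂ,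
        HasDerivWithinAt (fun s => (∑ i ∈ P, a i)⁻¹ • ∑ i ∈ P, a i • x i s) v
          (Set.Ico (0:ℝ) T) t ∧
        ‖v‖ ≤ C * ∑ i ∈ P, ∑ j ∈ Pᶜ, 1 / ‖x i t - x j t‖ ^ α :=
  quasi_preservation_barycenter_general N α a
end

section
/- (Conservation laws for the α-point-vortex system) Let α ≥ 0, let a_1, …, a_N be nonzero reals, let (x_1, …, x_N) be a solution of the α-point-vortex system on [0,T), and let K : (0,∞) → ℝ be a differentiable function with K'(r) = r^{−α} for all r > 0. Then the three functions H(t) := (1/2) ∑_{i ≠ j} a_i a_j K(|x_i(t) − x_j(t)|), M(t) := ∑_{i=1}^N a_i x_i(t), and I(t) := ∑_{i=1}^N a_i |x_i(t)|² are constant on [0,T). -/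
/-!
Write the velocity of the `i`-th vortex as `v_i = I * W_i` with
`W_i = ∑_{j ≠ i} a_j g(|x_i - x_j|) (x_i - x_j)` and `g r = K'(r) / r = r^{-α-1}`.
The time derivatives of `M` and `I` are off-diagonal double sums whose summands are
antisymmetric in `(i, j)`, so they vanish. Symmetrising the derivative of `H` turns it into
`∑_i a_i ⟪W_i, I W_i⟫`, which vanishes because multiplication by `I` is a rotation by a right
angle.
-/

open Finset Complex
open scoped RealInnerProductSpace

section OffDiagonal

variable {ι M : Type*} [Fintype ι] [DecidableEq ι]

theorem sum_offDiag_comm [AddCommMonoid M] (f : ι → ι → M) :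
    ∑ i, ∑ j ∈ univ.filter (· ≠ i), f i j = ∑ i, ∑ j ∈ univ.filter (· ≠ i), f j i := by
  simp only [sum_filter]
  rw [sum_comm]
  exact sum_congr rfl fun i _ => sum_congr rfl fun j _ => by simp only [ne_comm]

theorem sum_offDiag_eq_zero_of_antisymm [AddCommGroup M] [IsAddTorsionFree M]
    {f : ι → ι → M} (hf : ∀ i j, f j i = -f i j) :
    ∑ i, ∑ j ∈ univ.filter (· ≠ i), f i j = 0 := by
  refine self_eq_neg.mp ?_
  simp only [← sum_neg_distrib, ← hf]
  exact sum_offDiag_comm f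

end OffDiagonal

theorem HasDerivWithinAt.norm {F : Type*} [NormedAddCommGroup F] [InnerProductSpace ℝ F]
    {f : ℝ → F} {f' : F} {s : Set ℝ} {t : ℝ} (hf : HasDerivWithinAt f f' s t) (h0 : f t ≠ 0) :
    HasDerivWithinAt (‖f ·‖) (⟪f t, f'⟫ / ‖f t‖) s t := by
  have hsqrt := hf.norm_sq.sqrt (by positivity)
  simp only [Real.sqrt_sq (norm_nonneg _)] at hsqrt
  convert hsqrt using 1
  field_simp

theorem eq_of_hasDerivWithinAt_Ico_zero {E : Type*} [NormedAddCommGroup E] [NormedSpace ℝ E]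
    {f : ℝ → E} {a b : ℝ} (hf : ∀ t ∈ Set.Ico a b, HasDerivWithinAt f 0 (Set.Ico a b) t) :
    ∀ t ∈ Set.Ico a b, f t = f a := by
  intro t ht
  refine (convex_Ico a b).is_const_of_fderivWithin_eq_zero
    (fun u hu => (hf u hu).differentiableWithinAt) (fun u hu => ?_) ht
    ⟨le_rfl, ht.1.trans_lt ht.2⟩
  rw [(hf u hu).hasFDerivWithinAt.fderivWithin (uniqueDiffOn_Ico a b u hu)]
  ext
  simp

theorem hasDerivWithinAt_sum_offDiag_mul_comp_norm_sub {ι F : Type*} [Fintype ι] [DecidableEq ι]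
    [NormedAddCommGroup F] [InnerProductSpace ℝ F] {x : ι → ℝ → F} {v : ι → F} {s : Set ℝ}
    {t : ℝ} (hx : ∀ i, HasDerivWithinAt (x i) (v i) s t) (hsep : ∀ i j, i ≠ j → x i t ≠ x j t)
    {K k : ℝ → ℝ} (hK : ∀ r, 0 < r → HasDerivAt K (k r) r) (c : ι → ι → ℝ) :
    HasDerivWithinAt (fun u => ∑ i, ∑ j ∈ univ.filter (· ≠ i), c i j * K ‖x i u - x j u‖)
      (∑ i, ∑ j ∈ univ.filter (· ≠ i),
        c i j * (k ‖x i t - x j t‖ / ‖x i t - x j t‖ * ⟪x i t - x j t, v i - v j⟫)) s t := by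
  refine HasDerivWithinAt.fun_sum fun i _ => HasDerivWithinAt.fun_sum fun j hj => ?_
  have hne : x i t - x j t ≠ 0 := sub_ne_zero.mpr (hsep i j (mem_filter.mp hj).2.symm)
  have hnorm : HasDerivWithinAt (fun u => ‖x i u - x j u‖)
      (⟪x i t - x j t, v i - v j⟫ / ‖x i t - x j t‖) s t := ((hx i).sub (hx j)).norm hne
  refine (((hK _ (norm_pos_iff.mpr hne)).comp_hasDerivWithinAt t hnorm).const_mul
    (c i j)).congr_deriv ?_
  ring

theorem Real.rpow_neg_div_self {r : ℝ} (hr : 0 < r) (α : ℝ) : r ^ (-α) / r = (r ^ (α + 1))⁻¹ := by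
  rw [Real.rpow_add_one hr.ne', Real.rpow_neg hr.le, div_eq_mul_inv, mul_inv]

theorem Complex.inner_I_mul_self (z : ℂ) : ⟪z, I * z⟫ = 0 := by
  simp only [Complex.inner, mul_re, I_re, I_im, conj_re, conj_im, mul_im]
  ring

theorem Complex.inner_I_mul_sub_comm (w z : ℂ) : ⟪w, I * (w - z)⟫ = -⟪z, I * (z - w)⟫ := by
  have h := inner_I_mul_self (w - z)
  rw [inner_sub_left, sub_eq_zero] at h
  rw [h, ← neg_sub w z, mul_neg, inner_neg_right, neg_neg]

section VortexVelocity

variable {ι : Type*} [Fintype ι] [DecidableEq ι] (a : ι → ℝ) (g : ℝ → ℝ) (p : ι → ℂ)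

/-- With `ℝ²` identified with `ℂ`, `v^⊥ = I * v`. -/
noncomputable def vortexVelocity (i : ι) : ℂ :=
  I * ∑ j ∈ univ.filter (· ≠ i), (a j * g ‖p i - p j‖) • (p i - p j)

theorem sum_smul_vortexVelocity : ∑ i, a i • vortexVelocity a g p i = 0 := by
  simp only [vortexVelocity, ← mul_smul_comm, ← mul_sum, smul_sum, smul_smul]
  rw [sum_offDiag_eq_zero_of_antisymm fun i j => ?_, mul_zero]
  rw [norm_sub_rev, ← neg_sub (p i) (p j), smul_neg, mul_left_comm]

theorem sum_mul_inner_vortexVelocity : ∑ i, a i * ⟪p i, vortexVelocity a g p i⟫ = 0 := by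
  simp only [vortexVelocity, mul_sum, inner_sum, mul_smul_comm, real_inner_smul_right]
  refine sum_offDiag_eq_zero_of_antisymm fun i j => ?_
  rw [norm_sub_rev, inner_I_mul_sub_comm]
  ring

theorem sum_offDiag_inner_sub_vortexVelocity :
    ∑ i, ∑ j ∈ univ.filter (· ≠ i),
      a i * a j * (g ‖p i - p j‖ * ⟪p i - p j, vortexVelocity a g p i - vortexVelocity a g p j⟫)
      = 0 := by
  set v := vortexVelocity a g p
  have h_self : ∑ i, ∑ j ∈ univ.filter (· ≠ i),
      a i * a j * (g ‖p i - p j‖ * ⟪p i - p j, v i⟫) = 0 := by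
    refine sum_eq_zero fun i _ => ?_
    have h := inner_I_mul_self (∑ j ∈ univ.filter (· ≠ i), (a j * g ‖p i - p j‖) • (p i - p j))
    simp only [sum_inner, real_inner_smul_left, mul_assoc] at h
    simp only [v, vortexVelocity, mul_assoc, ← mul_sum, h, mul_zero]
  have h_swap : ∑ i, ∑ j ∈ univ.filter (· ≠ i), a i * a j * (g ‖p i - p j‖ * ⟪p i - p j, v j⟫)
      = -∑ i, ∑ j ∈ univ.filter (· ≠ i), a i * a j * (g ‖p i - p j‖ * ⟪p i - p j, v i⟫) := by
    rw [sum_offDiag_comm]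
    simp only [← sum_neg_distrib]
    refine sum_congr rfl fun i _ => sum_congr rfl fun j _ => ?_
    rw [norm_sub_rev, ← neg_sub (p i) (p j), inner_neg_left]
    ring
  simp only [inner_sub_right, mul_sub, sum_sub_distrib, h_swap, h_self, neg_zero, sub_zero]

end VortexVelocity

theorem alpha_point_vortex_conservation_general (N : ℕ) (α : ℝ)
    (a : Fin N → ℝ) (T : ℝ)
    (x : Fin N → ℝ → ℂ)
    (hsep : ∀ i j, i ≠ j → ∀ t ∈ Set.Ico (0:ℝ) T, x i t ≠ x j t)
    (hode : ∀ i, ∀ t ∈ Set.Ico (0:ℝ) T,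
      HasDerivWithinAt (x i)
        (∑ j ∈ Finset.univ.filter (fun j => j ≠ i),
          (a j / ‖x i t - x j t‖ ^ (α + 1)) • (Complex.I * (x i t - x j t)))
        (Set.Ico (0:ℝ) T) t)
    (K : ℝ → ℝ) (hK : ∀ r : ℝ, 0 < r → HasDerivAt K (r ^ (-α)) r) :
    (∀ t ∈ Set.Ico (0:ℝ) T,
      (1 / 2) * ∑ i, ∑ j ∈ Finset.univ.filter (fun j => j ≠ i),
          a i * a j * K ‖x i t - x j t‖
        = (1 / 2) * ∑ i, ∑ j ∈ Finset.univ.filter (fun j => j ≠ i),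
            a i * a j * K ‖x i 0 - x j 0‖) ∧
    (∀ t ∈ Set.Ico (0:ℝ) T, (∑ i, a i • x i t) = ∑ i, a i • x i 0) ∧
    (∀ t ∈ Set.Ico (0:ℝ) T, (∑ i, a i * ‖x i t‖ ^ 2) = ∑ i, a i * ‖x i 0‖ ^ 2) := by
  have hvel : ∀ t ∈ Set.Ico (0:ℝ) T, ∀ i, HasDerivWithinAt (x i)
      (vortexVelocity a (fun r => r ^ (-α) / r) (x · t) i) (Set.Ico (0:ℝ) T) t := by
    intro t ht i
    convert hode i t ht using 1
    simp only [vortexVelocity, mul_sum]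
    refine sum_congr rfl fun j hj => ?_
    have hr : 0 < ‖x i t - x j t‖ :=
      norm_pos_iff.mpr (sub_ne_zero.mpr (hsep i j (mem_filter.mp hj).2.symm t ht))
    rw [Real.rpow_neg_div_self hr, ← div_eq_mul_inv, mul_smul_comm]
  refine ⟨?_, ?_, ?_⟩ <;> refine eq_of_hasDerivWithinAt_Ico_zero fun t ht => ?_
  · have h := (hasDerivWithinAt_sum_offDiag_mul_comp_norm_sub (hvel t ht)
      (fun i j hij => hsep i j hij t ht) hK fun i j => a i * a j).const_mul (1 / 2)
    have h_zero := sum_offDiag_inner_sub_vortexVelocity a (fun r => r ^ (-α) / r) (x · t)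
    beta_reduce at h_zero
    rwa [h_zero, mul_zero] at h
  · have h := HasDerivWithinAt.fun_sum (u := univ) fun i _ => (hvel t ht i).const_smul (a i)
    rwa [sum_smul_vortexVelocity] at h
  · have h := HasDerivWithinAt.fun_sum (u := univ) fun i _ =>
      (hvel t ht i).norm_sq.const_mul (a i)
    simpa only [mul_left_comm (a _), ← mul_sum, sum_mul_inner_vortexVelocity, mul_zero] using h

/-- **Conservation laws for the α-point-vortex system.**
Identifying `ℝ²` with `ℂ` (so `v^⊥ = I * v`), let `(x₁,…,x_N)` be a solution of the
`α`-point-vortex system on `[0,T)` and let `K : (0,∞) → ℝ` be differentiable with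
`K'(r) = r^{−α}`. Then the Hamiltonian `H(t) = ½ ∑_{i≠j} a_i a_j K(‖x_i(t)−x_j(t)‖)`,
the vorticity vector `M(t) = ∑ a_i x_i(t)` and the vorticity momentum
`I(t) = ∑ a_i ‖x_i(t)‖²` are constant on `[0,T)`. -/
theorem alpha_point_vortex_conservation (N : ℕ) (α : ℝ) (hα : 0 ≤ α)
    (a : Fin N → ℝ) (ha : ∀ i, a i ≠ 0) (T : ℝ) (hT : 0 < T)
    (x : Fin N → ℝ → ℂ)
    (hsep : ∀ i j, i ≠ j → ∀ t ∈ Set.Ico (0:ℝ) T, x i t ≠ x j t)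
    (hode : ∀ i, ∀ t ∈ Set.Ico (0:ℝ) T,
      HasDerivWithinAt (x i)
        (∑ j ∈ Finset.univ.filter (fun j => j ≠ i),
          (a j / ‖x i t - x j t‖ ^ (α + 1)) • (Complex.I * (x i t - x j t)))
        (Set.Ico (0:ℝ) T) t)
    (K : ℝ → ℝ) (hK : ∀ r : ℝ, 0 < r → HasDerivAt K (r ^ (-α)) r) :
    (∀ t ∈ Set.Ico (0:ℝ) T,
      (1 / 2) * ∑ i, ∑ j ∈ Finset.univ.filter (fun j => j ≠ i),
          a i * a j * K ‖x i t - x j t‖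
        = (1 / 2) * ∑ i, ∑ j ∈ Finset.univ.filter (fun j => j ≠ i),
            a i * a j * K ‖x i 0 - x j 0‖) ∧
    (∀ t ∈ Set.Ico (0:ℝ) T, (∑ i, a i • x i t) = ∑ i, a i • x i 0) ∧
    (∀ t ∈ Set.Ico (0:ℝ) T, (∑ i, a i * ‖x i t‖ ^ 2) = ∑ i, a i * ‖x i 0‖ ^ 2) :=
  alpha_point_vortex_conservation_general N α a T x hsep hode K hK
end

section
/- (Speed of the empirical vorticity measure in a bounded domain) Let Ω ⊂ ℝ² be a bounded open set, let a_1, …, a_N be nonzero reals, let C_0, C_1 ≥ 0 and T > 0. Let x_1, …, x_N : [0,T) → Ω be differentiable curves with pairwise distinct values for every t, satisfying x_i'(t) = g_i(t) + (1/2π) ∑_{j ≠ i} a_j (x_i(t) − x_j(t))^⊥ / |x_i(t) − x_j(t)|², where the perturbations g_i : [0,T) → ℝ² satisfy |g_i(t)| ≤ C_0 / dist(x_i(t), ∂Ω) + C_1 for all t. Then there exists C > 0 depending only on a_1, …, a_N, C_0 and C_1 such that for every C^∞ function φ : ℝ² → ℝ compactly supported inside Ω and every t ∈ [0,T), | d/dt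 ∑_{i=1}^N a_i φ(x_i(t)) | ≤ C ‖∇φ‖_{L^∞} ( 1/dist(supp φ, ∂Ω) + 1 ) + C ‖∇²φ‖_{L^∞}. -/
set_option maxHeartbeats 1000000


/-- Distance between two sets in the plane (identified with `ℂ`):
`inf {dist y z : y ∈ s, z ∈ t}`. -/
noncomputable def setDistC (s t : Set ℂ) : ℝ := sInf (Set.image2 dist s t)

/-- **Speed of the empirical vorticity measure in a bounded domain.**
Identifying `ℝ²` with `ℂ` (so `v^⊥ = I * v`), let `a i` be nonzero intensities and
`C₀, C₁ ≥ 0`. There is `C > 0` depending only on the intensities, `C₀` and `C₁` such that: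
for every bounded open `Ω ⊆ ℂ`, every `T > 0` and every family of differentiable curves
`x i : [0,T) → Ω` with pairwise distinct values, driven by the Euler point-vortex field plus
perturbations `g i` with `‖g i t‖ ≤ C₀/dist(x i t, ∂Ω) + C₁`, and for every `C^∞` function
`φ` compactly supported inside `Ω`, the map `t ↦ ∑ a i φ(x i t)` has derivative bounded by
`C ‖∇φ‖_∞ (1/dist(supp φ, ∂Ω) + 1) + C ‖∇²φ‖_∞`. -/
theorem empirical_measure_speed (N : ℕ) (a : Fin N → ℝ) (ha : ∀ i, a i ≠ 0)
    (C0 C1 : ℝ) (hC0 : 0 ≤ C0) (hC1 : 0 ≤ C1) :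
    ∃ C > 0, ∀ Ω : Set ℂ, IsOpen Ω → Bornology.IsBounded Ω →
      ∀ T : ℝ, 0 < T → ∀ x g : Fin N → ℝ → ℂ,
      (∀ i, ∀ t ∈ Set.Ico (0:ℝ) T, x i t ∈ Ω) →
      (∀ i j, i ≠ j → ∀ t ∈ Set.Ico (0:ℝ) T, x i t ≠ x j t) →
      (∀ i, ∀ t ∈ Set.Ico (0:ℝ) T,
        ‖g i t‖ ≤ C0 / Metric.infDist (x i t) (frontier Ω) + C1) →
      (∀ i, ∀ t ∈ Set.Ico (0:ℝ) T,
        HasDerivWithinAt (x i)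
          (g i t + (1 / (2 * Real.pi)) •
            ∑ j ∈ Finset.univ.filter (fun j => j ≠ i),
              (a j / ‖x i t - x j t‖ ^ 2) • (Complex.I * (x i t - x j t)))
          (Set.Ico (0:ℝ) T) t) →
      ∀ φ : ℂ → ℝ, ContDiff ℝ (⊤ : ℕ∞) φ → HasCompactSupport φ → tsupport φ ⊆ Ω →
      ∀ t ∈ Set.Ico (0:ℝ) T, ∃ v : ℝ,
        HasDerivWithinAt (fun s => ∑ i, a i * φ (x i s)) v (Set.Ico (0:ℝ) T) t ∧
        |v| ≤ C * (⨆ z : ℂ, ‖fderiv ℝ φ z‖) * (1 / setDistC (tsupport φ) (frontier Ω) + 1)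
              + C * ⨆ z : ℂ, ‖fderiv ℝ (fderiv ℝ φ) z‖ := by
  classical
  set A : ℝ := ∑ i, |a i| with hAdef
  have hA0 : 0 ≤ A := Finset.sum_nonneg fun i _ => abs_nonneg _
  refine ⟨(A + 1) ^ 2 * (C0 + C1 + 1), by positivity, ?_⟩
  intro Ω hΩo hΩb T hT x g hxΩ hxne hg hx φ hφ hφc hφΩ t ht
  set M1 : ℝ := ⨆ z : ℂ, ‖fderiv ℝ φ z‖ with hM1def
  set M2 : ℝ := ⨆ z : ℂ, ‖fderiv ℝ (fderiv ℝ φ) z‖ with hM2def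
  set d : ℝ := setDistC (tsupport φ) (frontier Ω) with hddef
  have hφd : Differentiable ℝ φ := hφ.differentiable (by simp)
  have hφ' : ContDiff ℝ (⊤ : ℕ∞) (fderiv ℝ φ) := hφ.fderiv_right (by simp)
  have hφ'' : ContDiff ℝ (⊤ : ℕ∞) (fderiv ℝ (fderiv ℝ φ)) := hφ'.fderiv_right (by simp)
  have hM1 : ∀ z, ‖fderiv ℝ φ z‖ ≤ M1 := fun z =>
    le_ciSup (hφ'.continuous.norm.bddAbove_range_of_hasCompactSupport ((hφc.fderiv ℝ).norm)) z
  have hM2 : ∀ z, ‖fderiv ℝ (fderiv ℝ φ) z‖ ≤ M2 := fun z =>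
    le_ciSup ((Continuous.norm (E := ℂ →L[ℝ] ℂ →L[ℝ] ℝ) hφ''.continuous).bddAbove_range_of_hasCompactSupport
      (HasCompactSupport.norm (E := ℂ →L[ℝ] ℂ →L[ℝ] ℝ) ((hφc.fderiv ℝ).fderiv ℝ))) z
  have hM1n : (0:ℝ) ≤ M1 := (norm_nonneg _).trans (hM1 0)
  have hM2n : (0:ℝ) ≤ M2 := (norm_nonneg (E := ℂ →L[ℝ] ℂ →L[ℝ] ℝ) _).trans (hM2 0)
  have hLip : ∀ z w : ℂ, ‖fderiv ℝ φ z - fderiv ℝ φ w‖ ≤ M2 * ‖z - w‖ := fun z w =>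
    Convex.norm_image_sub_le_of_norm_fderiv_le (fun u _ => (hφ'.differentiable (by simp)) u)
      (fun u _ => hM2 u) convex_univ trivial trivial
  have hd0 : (0:ℝ) ≤ d := Real.sInf_nonneg fun r hr => by
    obtain ⟨y, -, z, -, rfl⟩ := hr
    exact dist_nonneg
  have h1d0 : (0:ℝ) ≤ 1 / d := by positivity
  have hbdd : BddBelow (Set.image2 dist (tsupport φ) (frontier Ω)) := by
    refine ⟨0, fun r hr => ?_⟩
    obtain ⟨y, -, z, -, rfl⟩ := hr
    exact dist_nonneg
  -- key bound on the perturbation terms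
  have hkey : ∀ i, ‖fderiv ℝ φ (x i t)‖ * ‖g i t‖ ≤ M1 * (C0 * (1 / d) + C1) := by
    intro i
    have hrhs0 : (0:ℝ) ≤ C0 * (1 / d) + C1 := by positivity
    by_cases hsupp : x i t ∈ tsupport φ
    · rcases (frontier Ω).eq_empty_or_nonempty with hF | hF
      · have hgle : ‖g i t‖ ≤ C1 := by
          have h := hg i t ht
          rwa [hF, Metric.infDist_empty, div_zero, zero_add] at h
        calc ‖fderiv ℝ φ (x i t)‖ * ‖g i t‖ ≤ M1 * C1 :=
              mul_le_mul (hM1 _) hgle (norm_nonneg _) hM1n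
          _ ≤ M1 * (C0 * (1 / d) + C1) := by nlinarith [mul_nonneg hC0 h1d0]
      · obtain ⟨y0, hy0, hmin⟩ := IsCompact.exists_isMinOn hφc ⟨_, hsupp⟩
          (Metric.continuous_infDist_pt (frontier Ω)).continuousOn
        have hy0pos : 0 < Metric.infDist y0 (frontier Ω) := by
          rw [← isClosed_frontier.notMem_iff_infDist_pos hF]
          intro hmem
          rw [hΩo.frontier_eq] at hmem
          exact hmem.2 (hφΩ hy0)
        have hmd : Metric.infDist y0 (frontier Ω) ≤ d := by
          refine le_csInf (Set.Nonempty.image2 ⟨_, hsupp⟩ hF) ?_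
          rintro r ⟨y, hy, z, hz, rfl⟩
          exact (hmin hy).trans (Metric.infDist_le_dist_of_mem hz)
        have hdpos : 0 < d := lt_of_lt_of_le hy0pos hmd
        have hdle : d ≤ Metric.infDist (x i t) (frontier Ω) := by
          by_contra hlt
          push_neg at hlt
          obtain ⟨z, hz, hzd⟩ := (Metric.infDist_lt_iff hF).mp hlt
          exact absurd (csInf_le hbdd (Set.mem_image2_of_mem hsupp hz)) (not_le.mpr hzd)
        have hgle : ‖g i t‖ ≤ C0 * (1 / d) + C1 := by
          refine (hg i t ht).trans ?_
          have h1 : C0 / Metric.infDist (x i t) (frontier Ω) ≤ C0 / d := by gcongr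
          rw [div_eq_mul_one_div C0 d] at h1
          linarith
        exact mul_le_mul (hM1 _) hgle (norm_nonneg _) hM1n
    · have hz : fderiv ℝ φ (x i t) = 0 :=
        image_eq_zero_of_notMem_tsupport (fun h => hsupp (tsupport_fderiv_subset ℝ h))
      rw [hz, norm_zero, zero_mul]
      exact mul_nonneg hM1n hrhs0
  -- the derivative
  set V : Fin N → ℂ := fun i => g i t + (1 / (2 * Real.pi)) •
      ∑ j ∈ Finset.univ.filter (fun j => j ≠ i),
        (a j / ‖x i t - x j t‖ ^ 2) • (Complex.I * (x i t - x j t)) with hVdef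
  refine ⟨∑ i, a i * (fderiv ℝ φ (x i t)) (V i), ?_, ?_⟩
  · exact HasDerivWithinAt.fun_sum fun i _ =>
      HasDerivWithinAt.const_mul (a i)
        ((hφd (x i t)).hasFDerivAt.comp_hasDerivWithinAt t (hx i t ht))
  -- the bound
  set e : Fin N → Fin N → ℝ := fun i j =>
    if j ≠ i then a i * (fderiv ℝ φ (x i t))
      ((a j / ‖x i t - x j t‖ ^ 2) • (Complex.I * (x i t - x j t))) else 0 with hedef
  set G : ℝ := ∑ i, a i * (fderiv ℝ φ (x i t)) (g i t) with hGdef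
  set Tq : ℝ := ∑ i, ∑ j, e i j with hTdef
  have hveq : (∑ i, a i * (fderiv ℝ φ (x i t)) (V i)) = G + (1 / (2 * Real.pi)) * Tq := by
    have hmul : ∀ i, a i * (fderiv ℝ φ (x i t)) (V i)
        = a i * (fderiv ℝ φ (x i t)) (g i t) + (1 / (2 * Real.pi)) * ∑ j, e i j := by
      intro i
      have hDi : (fderiv ℝ φ (x i t)) (V i) = (fderiv ℝ φ (x i t)) (g i t)
          + (1 / (2 * Real.pi)) * ∑ j ∈ Finset.univ.filter (fun j => j ≠ i),
              (fderiv ℝ φ (x i t))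
                ((a j / ‖x i t - x j t‖ ^ 2) • (Complex.I * (x i t - x j t))) := by
        rw [hVdef]
        simp only [map_add, map_smul, map_sum, smul_eq_mul]
      rw [hDi, mul_add]
      congr 1
      rw [hedef]
      rw [← Finset.sum_filter, ← Finset.mul_sum]
      ring
    calc (∑ i, a i * (fderiv ℝ φ (x i t)) (V i))
        = ∑ i, (a i * (fderiv ℝ φ (x i t)) (g i t) + (1 / (2 * Real.pi)) * ∑ j, e i j) :=
          Finset.sum_congr rfl fun i _ => hmul i
      _ = G + (1 / (2 * Real.pi)) * Tq := by
          rw [Finset.sum_add_distrib, ← Finset.mul_sum, hGdef, hTdef]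
  -- pair estimate
  have hpair : ∀ i j, |e i j + e j i| ≤ |a i| * |a j| * M2 := by
    intro i j
    by_cases hij : j = i
    · subst hij
      simp only [hedef, ne_eq, not_true_eq_false, if_false, add_zero, abs_zero]
      positivity
    · have hne : x i t ≠ x j t := hxne i j (fun h => hij h.symm) t ht
      have hy0 : x i t - x j t ≠ 0 := sub_ne_zero.mpr hne
      have hr : 0 < ‖x i t - x j t‖ := norm_pos_iff.mpr hy0
      have hyswap : x j t - x i t = -(x i t - x j t) := by ring
      have hnswap : ‖x j t - x i t‖ = ‖x i t - x j t‖ := by rw [hyswap, norm_neg]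
      have he1 : e i j = (a i * a j / ‖x i t - x j t‖ ^ 2)
          * ((fderiv ℝ φ (x i t)) (Complex.I * (x i t - x j t))) := by
        simp only [hedef, ne_eq, hij, not_false_eq_true, if_true, map_smul, smul_eq_mul]
        ring
      have harg : Complex.I * (x j t - x i t) = -(Complex.I * (x i t - x j t)) := by
        rw [hyswap]; ring
      have he2 : e j i = -((a i * a j / ‖x i t - x j t‖ ^ 2)
          * ((fderiv ℝ φ (x j t)) (Complex.I * (x i t - x j t)))) := by
        have hii : ¬ (i = j) := fun h => hij h.symm
        simp only [hedef, ne_eq, hii, not_false_eq_true, if_true, map_smul, smul_eq_mul]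
        rw [hnswap, harg, map_neg]
        ring
      have hsum : e i j + e j i = (a i * a j / ‖x i t - x j t‖ ^ 2)
          * ((fderiv ℝ φ (x i t) - fderiv ℝ φ (x j t)) (Complex.I * (x i t - x j t))) := by
        rw [he1, he2, ContinuousLinearMap.sub_apply]
        ring
      rw [hsum, abs_mul]
      have h1 : |a i * a j / ‖x i t - x j t‖ ^ 2|
          = |a i| * |a j| / ‖x i t - x j t‖ ^ 2 := by
        rw [abs_div, abs_mul, abs_of_nonneg (by positivity : (0:ℝ) ≤ ‖x i t - x j t‖ ^ 2)]
      have h2 : |(fderiv ℝ φ (x i t) - fderiv ℝ φ (x j t)) (Complex.I * (x i t - x j t))|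
          ≤ (M2 * ‖x i t - x j t‖) * ‖x i t - x j t‖ := by
        rw [← Real.norm_eq_abs]
        calc ‖(fderiv ℝ φ (x i t) - fderiv ℝ φ (x j t)) (Complex.I * (x i t - x j t))‖
            ≤ ‖fderiv ℝ φ (x i t) - fderiv ℝ φ (x j t)‖ * ‖Complex.I * (x i t - x j t)‖ :=
              ContinuousLinearMap.le_opNorm _ _
          _ ≤ (M2 * ‖x i t - x j t‖) * ‖x i t - x j t‖ := by
              rw [norm_mul, Complex.norm_I, one_mul]
              exact mul_le_mul_of_nonneg_right (hLip _ _) (norm_nonneg _)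
      rw [h1]
      calc |a i| * |a j| / ‖x i t - x j t‖ ^ 2
            * |(fderiv ℝ φ (x i t) - fderiv ℝ φ (x j t)) (Complex.I * (x i t - x j t))|
          ≤ |a i| * |a j| / ‖x i t - x j t‖ ^ 2
            * ((M2 * ‖x i t - x j t‖) * ‖x i t - x j t‖) := by
            exact mul_le_mul_of_nonneg_left h2 (by positivity)
        _ = |a i| * |a j| * M2 := by
            rw [div_mul_eq_mul_div, div_eq_iff (by positivity : ‖x i t - x j t‖ ^ 2 ≠ 0)]
            ring
  -- symmetrization
  have hTswap : Tq = ∑ i, ∑ j, e j i := by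
    rw [hTdef]; exact Finset.sum_comm
  have hTbound : |Tq| ≤ A * A * M2 / 2 := by
    have h2T : 2 * Tq = ∑ i, ∑ j, (e i j + e j i) := by
      simp only [Finset.sum_add_distrib]
      rw [← hTdef, ← hTswap]
      ring
    have hb : |∑ i, ∑ j, (e i j + e j i)| ≤ A * A * M2 := by
      calc |∑ i, ∑ j, (e i j + e j i)| ≤ ∑ i, |∑ j, (e i j + e j i)| :=
            Finset.abs_sum_le_sum_abs _ _
        _ ≤ ∑ i, ∑ j, |e i j + e j i| :=
            Finset.sum_le_sum fun i _ => Finset.abs_sum_le_sum_abs _ _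
        _ ≤ ∑ i : Fin N, ∑ j : Fin N, |a i| * |a j| * M2 :=
            Finset.sum_le_sum fun i _ => Finset.sum_le_sum fun j _ => hpair i j
        _ = A * A * M2 := by
            rw [hAdef, Finset.sum_mul_sum, Finset.sum_mul]
            simp_rw [Finset.sum_mul]
      -- end calc
    have : |2 * Tq| ≤ A * A * M2 := h2T ▸ hb
    rw [abs_mul, abs_two] at this
    linarith [abs_nonneg Tq]
  have hGbound : |G| ≤ A * (M1 * (C0 * (1 / d) + C1)) := by
    calc |G| ≤ ∑ i, |a i * (fderiv ℝ φ (x i t)) (g i t)| := Finset.abs_sum_le_sum_abs _ _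
      _ ≤ ∑ i, |a i| * (M1 * (C0 * (1 / d) + C1)) := by
          refine Finset.sum_le_sum fun i _ => ?_
          rw [abs_mul]
          refine mul_le_mul_of_nonneg_left ?_ (abs_nonneg _)
          calc |(fderiv ℝ φ (x i t)) (g i t)| ≤ ‖fderiv ℝ φ (x i t)‖ * ‖g i t‖ := by
                rw [← Real.norm_eq_abs]
                exact ContinuousLinearMap.le_opNorm _ _
            _ ≤ M1 * (C0 * (1 / d) + C1) := hkey i
      _ = A * (M1 * (C0 * (1 / d) + C1)) := by rw [← Finset.sum_mul]
  rw [hveq]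
  have hπ : 0 < Real.pi := Real.pi_pos
  have hπ1 : (1:ℝ) / (2 * Real.pi) ≤ 1 := by
    rw [div_le_one (by positivity)]
    nlinarith [Real.pi_gt_three]
  have hπ0 : (0:ℝ) ≤ 1 / (2 * Real.pi) := by positivity
  calc |G + (1 / (2 * Real.pi)) * Tq| ≤ |G| + (1 / (2 * Real.pi)) * |Tq| := by
        calc |G + (1 / (2 * Real.pi)) * Tq| ≤ |G| + |(1 / (2 * Real.pi)) * Tq| := abs_add_le _ _
          _ = |G| + (1 / (2 * Real.pi)) * |Tq| := by rw [abs_mul, abs_of_nonneg hπ0]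
    _ ≤ A * (M1 * (C0 * (1 / d) + C1)) + 1 * (A * A * M2 / 2) := by
        refine add_le_add hGbound ?_
        exact mul_le_mul hπ1 hTbound (abs_nonneg _) zero_le_one
    _ ≤ (A + 1) ^ 2 * (C0 + C1 + 1) * M1 * (1 / d + 1)
        + (A + 1) ^ 2 * (C0 + C1 + 1) * M2 := by
        have k1 : A * C0 ≤ (A + 1) ^ 2 * (C0 + C1 + 1) := by nlinarith
        have k2 : A * C1 ≤ (A + 1) ^ 2 * (C0 + C1 + 1) := by nlinarith
        have k3 : A * A / 2 ≤ (A + 1) ^ 2 * (C0 + C1 + 1) := by nlinarith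
        have hu : (0:ℝ) ≤ M1 * (1 / d) := mul_nonneg hM1n h1d0
        have s1 : A * (M1 * (C0 * (1 / d) + C1))
            ≤ (A + 1) ^ 2 * (C0 + C1 + 1) * M1 * (1 / d + 1) := by
          nlinarith [mul_le_mul_of_nonneg_right k1 hu, mul_le_mul_of_nonneg_right k2 hM1n]
        have s2 : 1 * (A * A * M2 / 2) ≤ (A + 1) ^ 2 * (C0 + C1 + 1) * M2 := by
          nlinarith [mul_le_mul_of_nonneg_right k3 hM2n]
        linarith
end

section
/- (Weak convergence of the empirical vorticity measure) Let Ω ⊂ ℝ² be a bounded open set, let a_1, …, a_N be nonzero reals, let C_0, C_1 ≥ 0 and T > 0. Let x_1, …, x_N : [0,T) → Ω be differentiable curves with pairwise distinct values for every t, satisfying x_i'(t) = g_i(t) + (1/2π) ∑_{j ≠ i} a_j (x_i(t) − x_j(t))^⊥ / |x_i(t) − x_j(t)|², where the perturbations g_i : [0,T) → ℝ² satisfy |g_i(t)| ≤ C_0 / dist(x_i(t), ∂Ω) + C_1 for all t. Then there exist points x_1*, …, x_N* in the closure of Ω and coefficients b_1, …, b_N ∈ {0,1}, with b_i = 0 exactly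 when x_i* ∈ ∂Ω, such that for every C^∞ function φ : ℝ² → ℝ compactly supported inside Ω, ∑_{i=1}^N a_i φ(x_i(t)) → ∑_{i=1}^N a_i b_i φ(x_i*) as t → T⁻. -/
/-- **Weak convergence of the empirical vorticity measure.**
Identifying `ℝ²` with `ℂ` (so `v^⊥ = I * v`), let `Ω ⊆ ℂ` be a bounded open set, `a i`
nonzero intensities, `C₀, C₁ ≥ 0`, `T > 0`, and let `x i : [0,T) → Ω` be differentiable curves
with pairwise distinct values driven by the Euler point-vortex field plus perturbations `g i`
with `‖g i t‖ ≤ C₀/dist(x i t, ∂Ω) + C₁`. Then there are points `x i *` in the closure of `Ω`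
and coefficients `b i ∈ {0,1}`, with `b i = 0` exactly when `x i * ∈ ∂Ω`, such that for every
`C^∞` function `φ` compactly supported inside `Ω`,
`∑ a i φ(x i t) → ∑ a i b i φ(x i *)` as `t → T⁻`. -/
theorem empirical_measure_weak_convergence (N : ℕ) (Ω : Set ℂ)
    (hΩo : IsOpen Ω) (hΩb : Bornology.IsBounded Ω)
    (a : Fin N → ℝ) (ha : ∀ i, a i ≠ 0)
    (C0 C1 T : ℝ) (hC0 : 0 ≤ C0) (hC1 : 0 ≤ C1) (hT : 0 < T)
    (x g : Fin N → ℝ → ℂ)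
    (hmem : ∀ i, ∀ t ∈ Set.Ico (0:ℝ) T, x i t ∈ Ω)
    (hsep : ∀ i j, i ≠ j → ∀ t ∈ Set.Ico (0:ℝ) T, x i t ≠ x j t)
    (hg : ∀ i, ∀ t ∈ Set.Ico (0:ℝ) T,
      ‖g i t‖ ≤ C0 / Metric.infDist (x i t) (frontier Ω) + C1)
    (hode : ∀ i, ∀ t ∈ Set.Ico (0:ℝ) T,
      HasDerivWithinAt (x i)
        (g i t + (1 / (2 * Real.pi)) •
          ∑ j ∈ Finset.univ.filter (fun j => j ≠ i),
            (a j / ‖x i t - x j t‖ ^ 2) • (Complex.I * (x i t - x j t)))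
        (Set.Ico (0:ℝ) T) t) :
    ∃ (xs : Fin N → ℂ) (b : Fin N → ℝ),
      (∀ i, xs i ∈ closure Ω) ∧
      (∀ i, b i = 0 ∨ b i = 1) ∧
      (∀ i, (b i = 0 ↔ xs i ∈ frontier Ω)) ∧
      ∀ φ : ℂ → ℝ, ContDiff ℝ (⊤ : ℕ∞) φ → HasCompactSupport φ → tsupport φ ⊆ Ω →
        Filter.Tendsto (fun t => ∑ i, a i * φ (x i t)) (nhdsWithin T (Set.Iio T))
          (nhds (∑ i, a i * b i * φ (xs i))) := by
  classical
  rcases Nat.eq_zero_or_pos N with hN | hN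
  · subst hN
    refine ⟨fun i => i.elim0, fun i => i.elim0, fun i => i.elim0, fun i => i.elim0,
      fun i => i.elim0, ?_⟩
    intro φ _ _ _
    simpa using tendsto_const_nhds
  have hIco0 : (0:ℝ) ∈ Set.Ico (0:ℝ) T := ⟨le_refl 0, hT⟩
  have hΩne : Ω.Nonempty := ⟨x ⟨0, hN⟩ 0, hmem ⟨0, hN⟩ 0 hIco0⟩
  have hfr : (frontier Ω).Nonempty := by
    by_contra h
    rw [Set.not_nonempty_iff_eq_empty] at h
    have hclopen : IsClopen Ω := isClopen_iff_frontier_eq_empty.2 h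
    have huniv : Ω = Set.univ := hclopen.eq_univ hΩne
    rw [huniv, isBounded_iff_forall_norm_le] at hΩb
    obtain ⟨C, hC⟩ := hΩb
    have h2 := hC ((|C| + 1 : ℝ) : ℂ) (Set.mem_univ _)
    rw [Complex.norm_real, Real.norm_eq_abs] at h2
    have h1 : |C| + 1 ≤ |(|C| + 1)| := le_abs_self _
    nlinarith [le_abs_self C, abs_nonneg C]
  -- the time sequence
  set tseq : ℕ → ℝ := fun n => T - T / (n + 1) with htseq
  have htmem : ∀ n, tseq n ∈ Set.Ico (0:ℝ) T := by
    intro n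
    have hn1 : (0:ℝ) < (n:ℝ) + 1 := by positivity
    constructor
    · have h1 : T / ((n:ℝ) + 1) ≤ T := by
        rw [div_le_iff₀ hn1]; nlinarith [hT.le, Nat.cast_nonneg (α := ℝ) n]
      simpa [tseq] using h1
    · have h1 : 0 < T / ((n:ℝ) + 1) := div_pos hT hn1
      simp only [tseq, sub_lt_self_iff]; exact h1
  have htT : Filter.Tendsto tseq Filter.atTop (nhds T) := by
    have h0 : Filter.Tendsto (fun n : ℕ => T / ((n:ℝ) + 1)) Filter.atTop (nhds 0) :=
      tendsto_const_nhds.div_atTop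
        (Filter.tendsto_atTop_add_const_right _ 1 tendsto_natCast_atTop_atTop)
    have h1 := (tendsto_const_nhds (x := T) (f := Filter.atTop (α := ℕ))).sub h0
    simpa [tseq] using h1
  -- convergent subsequence of positions
  have hcl : IsCompact (Set.univ.pi fun _ : Fin N => closure Ω) :=
    isCompact_univ_pi fun _ => hΩb.isCompact_closure
  have hmemcl : ∀ n, (fun i => x i (tseq n)) ∈ Set.univ.pi fun _ : Fin N => closure Ω :=
    fun n i _ => subset_closure (hmem i _ (htmem n))
  obtain ⟨xs, hxscl, σ, hσ, hxslim⟩ := hcl.tendsto_subseq hmemcl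
  have hxs : ∀ i, xs i ∈ closure Ω := fun i => hxscl i (Set.mem_univ i)
  have hxilim : ∀ i, Filter.Tendsto (fun n => x i (tseq (σ n))) Filter.atTop (nhds (xs i)) :=
    fun i => tendsto_pi_nhds.1 hxslim i
  refine ⟨xs, fun i => if xs i ∈ frontier Ω then 0 else 1, hxs, ?_, ?_, ?_⟩
  · intro i; by_cases h : xs i ∈ frontier Ω <;> simp [h]
  · intro i; by_cases h : xs i ∈ frontier Ω <;> simp [h]
  intro φ hφ hφc hφΩ
  set F : ℝ → ℝ := fun t => ∑ i, a i * φ (x i t) with hF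
  have hφd : Differentiable ℝ φ := hφ.differentiable (by simp)
  -- δ : distance from the support of φ to the boundary
  obtain ⟨δ, hδpos, hδ⟩ := hφc.exists_thickening_subset_open hΩo hφΩ
  have hdistK : ∀ z ∈ tsupport φ, δ ≤ Metric.infDist z (frontier Ω) := by
    intro z hz
    by_contra h
    push_neg at h
    obtain ⟨y, hy, hyd⟩ := (Metric.infDist_lt_iff hfr).1 h
    have hythick : y ∈ Metric.thickening δ (tsupport φ) := by
      rw [Metric.mem_thickening_iff]
      exact ⟨z, hz, by rwa [dist_comm]⟩
    have hyΩ : y ∉ Ω := by rw [hΩo.frontier_eq] at hy; exact hy.2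
    exact hyΩ (hδ hythick)
  -- A1 : bound on ‖fderiv φ‖ ; A2 : Lipschitz constant of fderiv φ
  obtain ⟨A1, hA1⟩ := (hφc.fderiv ℝ).exists_bound_of_continuous (hφ.continuous_fderiv (by simp))
  obtain ⟨A2, hA2⟩ := ContDiff.lipschitzWith_of_hasCompactSupport (hφc.fderiv ℝ)
    (hφ.fderiv_right (m := 1) (WithTop.coe_le_coe.2 le_top)) (by simp)
  have hA1nonneg : 0 ≤ A1 := le_trans (norm_nonneg _) (hA1 0)
  set Asum : ℝ := ∑ i, |a i| with hAsum
  have hAsumnn : 0 ≤ Asum := Finset.sum_nonneg fun i _ => abs_nonneg _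
  have hπ : (0:ℝ) < 2 * Real.pi := by positivity
  set M : ℝ := Asum * (A1 * (C0 / δ + C1)) +
      (1 / (2 * Real.pi)) * ((Asum * Asum * (A2:ℝ)) / 2) with hM
  have hA2nn : (0:ℝ) ≤ (A2:ℝ) := A2.coe_nonneg
  have hMnn : 0 ≤ M := by
    rw [hM]
    have h2 : (0:ℝ) ≤ 1 / (2 * Real.pi) := by positivity
    have h3 : (0:ℝ) ≤ Asum * (A1 * (C0 / δ + C1)) := by positivity
    have h4 : (0:ℝ) ≤ (Asum * Asum * (A2:ℝ)) / 2 := by positivity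
    exact add_nonneg h3 (mul_nonneg h2 h4)
  -- F is Lipschitz on [0, T)
  have hFlip : LipschitzOnWith M.toNNReal F (Set.Ico (0:ℝ) T) := by
    rw [lipschitzOnWith_iff_dist_le_mul]
    intro s hs t ht
    rw [dist_eq_norm, dist_eq_norm, Real.coe_toNNReal _ hMnn]
    set v : Fin N → ℝ → ℂ := fun i t => g i t + (1 / (2 * Real.pi)) •
      ∑ j ∈ Finset.univ.filter (fun j => j ≠ i),
        (a j / ‖x i t - x j t‖ ^ 2) • (Complex.I * (x i t - x j t)) with hv
    have hFderiv : ∀ u ∈ Set.Ico (0:ℝ) T,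
        HasDerivWithinAt F (∑ i, a i * (fderiv ℝ φ (x i u)) (v i u)) (Set.Ico (0:ℝ) T) u := by
      intro u hu
      refine HasDerivWithinAt.fun_sum fun i _ => ?_
      exact ((hφd (x i u)).hasFDerivAt.comp_hasDerivWithinAt u (hode i u hu)).const_mul (a i)
    have hbound : ∀ u ∈ Set.Ico (0:ℝ) T, ‖∑ i, a i * (fderiv ℝ φ (x i u)) (v i u)‖ ≤ M := by
      intro u hu
      set D : Fin N → (ℂ →L[ℝ] ℝ) := fun i => fderiv ℝ φ (x i u) with hD
      set f : Fin N → Fin N → ℝ := fun i j =>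
        a i * D i ((a j / ‖x i u - x j u‖ ^ 2) • (Complex.I * (x i u - x j u))) with hf
      -- split each term
      have hsplit : ∀ i : Fin N, a i * D i (v i u) =
          a i * D i (g i u) + (1 / (2 * Real.pi)) *
            ∑ j ∈ Finset.univ.filter (fun j => j ≠ i), f i j := by
        intro i
        have h1 : D i (v i u) = D i (g i u) + (1 / (2 * Real.pi)) *
            ∑ j ∈ Finset.univ.filter (fun j => j ≠ i),
              D i ((a j / ‖x i u - x j u‖ ^ 2) • (Complex.I * (x i u - x j u))) := by
          rw [hv]
          simp only [map_add, map_smul, map_sum, smul_eq_mul]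
        rw [h1, mul_add, mul_left_comm, Finset.mul_sum]
      have hsum_split : ∑ i, a i * D i (v i u) =
          (∑ i, a i * D i (g i u)) + (1 / (2 * Real.pi)) *
            ∑ i, ∑ j ∈ Finset.univ.filter (fun j => j ≠ i), f i j := by
        rw [Finset.mul_sum, ← Finset.sum_add_distrib]
        exact Finset.sum_congr rfl fun i _ => hsplit i
      -- perturbation part
      have hpert : ∀ i : Fin N, |a i * D i (g i u)| ≤ |a i| * (A1 * (C0 / δ + C1)) := by
        intro i
        rw [abs_mul]
        refine mul_le_mul_of_nonneg_left ?_ (abs_nonneg _)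
        by_cases hxi : x i u ∈ tsupport φ
        · have h1 : |D i (g i u)| ≤ ‖D i‖ * ‖g i u‖ := (D i).le_opNorm (g i u)
          have h2 : ‖g i u‖ ≤ C0 / δ + C1 := by
            refine le_trans (hg i u hu) ?_
            have h3 : C0 / Metric.infDist (x i u) (frontier Ω) ≤ C0 / δ :=
              div_le_div_of_nonneg_left hC0 hδpos (hdistK _ hxi)
            linarith
          calc |D i (g i u)| ≤ ‖D i‖ * ‖g i u‖ := h1
            _ ≤ A1 * (C0 / δ + C1) :=
              mul_le_mul (hA1 _) h2 (norm_nonneg _) hA1nonneg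
        · have hD0 : D i = 0 := by
            rw [hD]
            exact image_eq_zero_of_notMem_tsupport fun hmem' => hxi (tsupport_fderiv_subset ℝ hmem')
          rw [hD0]
          simp only [ContinuousLinearMap.zero_apply, abs_zero]
          positivity
      have hP : |∑ i, a i * D i (g i u)| ≤ Asum * (A1 * (C0 / δ + C1)) := by
        refine le_trans (Finset.abs_sum_le_sum_abs _ _) ?_
        rw [hAsum, Finset.sum_mul]
        exact Finset.sum_le_sum fun i _ => hpert i
      -- interaction part: antisymmetry and bound
      have hpair : ∀ i j : Fin N, i ≠ j → |f i j + f j i| ≤ |a i| * |a j| * (A2:ℝ) := by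
        intro i j hij
        set z : ℂ := x i u - x j u with hz
        have hzne : z ≠ 0 := sub_ne_zero.2 (hsep i j hij u hu)
        set r : ℝ := ‖z‖ with hr
        have hrpos : 0 < r := norm_pos_iff.2 hzne
        have hxji : x j u - x i u = -z := by rw [hz]; ring
        have hfij : f i j = a i * ((a j / r ^ 2) * D i (Complex.I * z)) := by
          rw [hf]; simp only [map_smul, smul_eq_mul]; rfl
        have hfji : f j i = -(a j * ((a i / r ^ 2) * D j (Complex.I * z))) := by
          rw [hf]
          simp only [hxji, norm_neg, mul_neg, map_smul, map_neg, smul_eq_mul]; rfl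
        have hIz : ‖Complex.I * z‖ = r := by
          rw [norm_mul, Complex.norm_I, one_mul]
        have hDij : |D i (Complex.I * z) - D j (Complex.I * z)| ≤ ((A2:ℝ) * r) * r := by
          have h1 : |(D i - D j) (Complex.I * z)| ≤ ‖D i - D j‖ * ‖Complex.I * z‖ :=
            (D i - D j).le_opNorm _
          have h2 : ‖D i - D j‖ ≤ (A2:ℝ) * r := by
            have h3 := hA2.dist_le_mul (x i u) (x j u)
            rw [dist_eq_norm, dist_eq_norm] at h3
            exact h3
          rw [ContinuousLinearMap.sub_apply] at h1
          calc |D i (Complex.I * z) - D j (Complex.I * z)|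
              ≤ ‖D i - D j‖ * ‖Complex.I * z‖ := h1
            _ ≤ ((A2:ℝ) * r) * r := by
                rw [hIz]
                exact mul_le_mul_of_nonneg_right h2 hrpos.le
        have hsum : f i j + f j i =
            (a i * a j / r ^ 2) * (D i (Complex.I * z) - D j (Complex.I * z)) := by
          rw [hfij, hfji]; ring
        rw [hsum, abs_mul, abs_div, abs_mul]
        have habs_r : |r ^ 2| = r ^ 2 := abs_of_pos (by positivity)
        rw [habs_r]
        calc |a i| * |a j| / r ^ 2 * |D i (Complex.I * z) - D j (Complex.I * z)|
            ≤ |a i| * |a j| / r ^ 2 * (((A2:ℝ) * r) * r) := by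
              refine mul_le_mul_of_nonneg_left hDij ?_
              positivity
          _ = |a i| * |a j| * (A2:ℝ) := by
              field_simp
      -- symmetrization of the double sum
      set S : ℝ := ∑ i, ∑ j ∈ Finset.univ.filter (fun j => j ≠ i), f i j with hS
      have hswap : S = ∑ i, ∑ j ∈ Finset.univ.filter (fun j => j ≠ i), f j i := by
        rw [hS]
        refine Finset.sum_comm' ?_
        intro i j
        simp only [Finset.mem_univ, Finset.mem_filter, true_and, and_true]
        exact ne_comm
      have h2S : S + S = ∑ i, ∑ j ∈ Finset.univ.filter (fun j => j ≠ i), (f i j + f j i) := by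
        nth_rewrite 2 [hswap]
        rw [hS, ← Finset.sum_add_distrib]
        exact Finset.sum_congr rfl fun i _ => (Finset.sum_add_distrib).symm
      have hsum2 : ∑ i : Fin N, ∑ j : Fin N, |a i| * |a j| * (A2:ℝ)
          = Asum * Asum * (A2:ℝ) := by
        simp only [← Finset.sum_mul, ← Finset.mul_sum, hAsum]
      have hSbound : |S| ≤ (Asum * Asum * (A2:ℝ)) / 2 := by
        have h1 : |S + S| ≤ Asum * Asum * (A2:ℝ) := by
          rw [h2S]
          refine le_trans (Finset.abs_sum_le_sum_abs _ _) ?_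
          rw [← hsum2]
          refine Finset.sum_le_sum fun i _ => ?_
          refine le_trans (Finset.abs_sum_le_sum_abs _ _) ?_
          refine le_trans (Finset.sum_le_sum
            (fun j hj => hpair i j (Ne.symm (Finset.mem_filter.1 hj).2))) ?_
          exact Finset.sum_le_sum_of_subset_of_nonneg (Finset.filter_subset _ _)
            (fun j _ _ => by positivity)
        have h2 : |S + S| = 2 * |S| := by
          rw [← two_mul, abs_mul]; simp
        linarith
      -- assemble
      rw [Real.norm_eq_abs, hsum_split]
      have hc : (0:ℝ) < 1 / (2 * Real.pi) := by positivity
      calc |(∑ i, a i * D i (g i u)) + (1 / (2 * Real.pi)) * S|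
          ≤ |∑ i, a i * D i (g i u)| + |(1 / (2 * Real.pi)) * S| := abs_add_le _ _
        _ ≤ Asum * (A1 * (C0 / δ + C1)) + (1 / (2 * Real.pi)) * ((Asum * Asum * (A2:ℝ)) / 2) := by
            have h3 : |(1 / (2 * Real.pi)) * S| = (1 / (2 * Real.pi)) * |S| := by
              rw [abs_mul, abs_of_pos hc]
            rw [h3]
            exact add_le_add hP (mul_le_mul_of_nonneg_left hSbound hc.le)
        _ = M := hM.symm
    have hMVT := Convex.norm_image_sub_le_of_norm_hasDerivWithin_le
      (f := F) (f' := fun u => ∑ i, a i * (fderiv ℝ φ (x i u)) (v i u))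
      hFderiv hbound (convex_Ico 0 T) ht hs
    exact hMVT
  -- extend F and take the limit
  obtain ⟨G, hGlip, hGeq⟩ := hFlip.extend_real
  have hFtend : Filter.Tendsto F (nhdsWithin T (Set.Ico 0 T)) (nhds (G T)) := by
    have hGt : Filter.Tendsto G (nhdsWithin T (Set.Ico 0 T)) (nhds (G T)) :=
      (hGlip.continuous.tendsto T).mono_left nhdsWithin_le_nhds
    refine hGt.congr' ?_
    exact (Filter.eventuallyEq_of_mem self_mem_nhdsWithin hGeq).symm
  have hfilter : nhdsWithin T (Set.Iio T) = nhdsWithin T (Set.Ico 0 T) := by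
    refine nhdsWithin_eq_iff_eventuallyEq.mpr ?_
    rw [Filter.eventuallyEq_set]
    filter_upwards [IsOpen.mem_nhds isOpen_Ioi hT] with t ht
    simp only [Set.mem_Iio, Set.mem_Ico]
    exact ⟨fun h => ⟨le_of_lt ht, h⟩, fun h => h.2⟩
  -- identify the limit
  have htseqW : Filter.Tendsto (fun n => tseq (σ n)) Filter.atTop (nhdsWithin T (Set.Ico 0 T)) :=
    tendsto_nhdsWithin_of_tendsto_nhds_of_eventually_within _
      (htT.comp hσ.tendsto_atTop) (Filter.Eventually.of_forall fun n => htmem _)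
  have hseq1 : Filter.Tendsto (fun n => F (tseq (σ n))) Filter.atTop (nhds (G T)) :=
    hFtend.comp htseqW
  have hseq2 : Filter.Tendsto (fun n => F (tseq (σ n))) Filter.atTop
      (nhds (∑ i, a i * φ (xs i))) := by
    refine tendsto_finset_sum _ fun i _ => ?_
    exact tendsto_const_nhds.mul ((hφ.continuous.tendsto (xs i)).comp (hxilim i))
  have hGT : G T = ∑ i, a i * φ (xs i) := tendsto_nhds_unique hseq1 hseq2
  have hsum_eq : ∑ i, a i * (if xs i ∈ frontier Ω then (0:ℝ) else 1) * φ (xs i)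
      = ∑ i, a i * φ (xs i) := by
    refine Finset.sum_congr rfl fun i _ => ?_
    by_cases h : xs i ∈ frontier Ω
    · have hxΩ : xs i ∉ Ω := by rw [hΩo.frontier_eq] at h; exact h.2
      have hφ0 : φ (xs i) = 0 :=
        image_eq_zero_of_notMem_tsupport fun hmem' => hxΩ (hφΩ hmem')
      simp [h, hφ0]
    · simp [h]
  rw [hfilter, hsum_eq, ← hGT]
  exact hFtend
end

section
/- (Explicit form of self-similar collapsing trajectories) Let α > 0, let N ≥ 2, let a_1, …, a_N be nonzero reals, and let (x_1, …, x_N) be a solution of the α-point-vortex system on [0,T) which is a self-similar collapse at time T, with scaling factor f and rotation angle θ. Then f(t) = ((T − t)/T)^{1/(α+1)} for all t ∈ [0,T), and there exists D ∈ ℝ such that, identifying ℝ² with ℂ, x_j(t) = x_j(0) · ((T − t)/T)^{1/(α+1)} · exp( −i D T ln((T − t)/T) ) for every j ∈ {1, …, N} and every t ∈ [0,T). -/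
/-!
The vortex velocity field is homogeneous under complex scaling: multiplying every position by
`w` multiplies every velocity by `w / |w|^(α+1)`. Along a self-similar solution the factor
`z = f e^{iθ}` therefore solves the scalar equation `z' = c z / |z|^(α+1)`, with `c` the
velocity of one nonzero vortex at time `0` divided by its position. Then `|z|^(α+1)` has
constant derivative `(α+1) Re c`, so it is affine, and `f T = 0` forces it to be `(T - t)/T`.
The equation becomes the linear one `z' = c T/(T - t) z`, whose solution is
`z = exp(-c T log((T - t)/T))`; its modulus and phase give the claim with `D = Im c`.
-/

open Set Complex

lemma eq_of_hasDerivWithinAt_zero_Ico {E : Type*} [NormedAddCommGroup E] [NormedSpace ℝ E]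
    {g : ℝ → E} {T : ℝ} (h : ∀ t ∈ Ico 0 T, HasDerivWithinAt g 0 (Ico 0 T) t) :
    ∀ t ∈ Ico 0 T, g t = g 0 := by
  intro t ht
  refine (convex_Ico 0 T).is_const_of_fderivWithin_eq_zero (𝕜 := ℝ)
    (fun s hs => (h s hs).differentiableWithinAt) (fun s hs => ?_) ht ⟨le_rfl, ht.1.trans_lt ht.2⟩
  rw [(h s hs).hasFDerivWithinAt.fderivWithin (uniqueDiffOn_Ico 0 T s hs)]
  ext
  simp

lemma HasDerivWithinAt.norm_rpow_of_eq_mul_div {z : ℝ → ℂ} {c : ℂ} {p : ℝ} {s : Set ℝ} {t : ℝ}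
    (hz : z t ≠ 0) (h : HasDerivWithinAt z (c * z t / (‖z t‖ ^ p : ℝ)) s t) :
    HasDerivWithinAt (fun r => ‖z r‖ ^ p) (p * c.re) s t := by
  have hsq : ‖z t‖ ^ 2 ≠ 0 := by positivity
  have hpow : ∀ r, ‖z r‖ ^ p = (‖z r‖ ^ 2) ^ (p / 2) := fun r => by
    rw [← Real.rpow_natCast, ← Real.rpow_mul (norm_nonneg _)]; ring_nf
  simp only [hpow]
  convert h.norm_sq.rpow_const (p := p / 2) (Or.inl hsq) using 1
  rw [Complex.inner, Real.rpow_sub_one hsq, ← hpow]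
  have hp : ‖z t‖ ^ p ≠ 0 := by positivity
  rw [div_mul_eq_mul_div, mul_assoc c, mul_conj, normSq_eq_norm_sq, div_ofReal_re, re_mul_ofReal]
  field_simp

lemma eq_mul_cexp_of_hasDerivWithinAt_mul {z K k : ℝ → ℂ} {T : ℝ}
    (hK : ∀ t ∈ Ico 0 T, HasDerivWithinAt K (k t) (Ico 0 T) t)
    (hz : ∀ t ∈ Ico 0 T, HasDerivWithinAt z (k t * z t) (Ico 0 T) t) :
    ∀ t ∈ Ico 0 T, z t = z 0 * exp (K t - K 0) := by
  have hconst := eq_of_hasDerivWithinAt_zero_Ico (g := fun t => z t * exp (-K t)) fun t ht =>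
    ((hz t ht).mul (hK t ht).neg.cexp).congr_deriv (by ring)
  intro t ht
  rw [sub_eq_add_neg, exp_add, mul_left_comm, ← hconst t ht, mul_left_comm, ← exp_add]
  simp

section PointVortex

variable {ι : Type*} [Fintype ι] [DecidableEq ι]

noncomputable def pointVortexVelocity (α : ℝ) (a : ι → ℝ) (y : ι → ℂ) (i : ι) : ℂ :=
  ∑ j ∈ Finset.univ.filter (fun j => j ≠ i), (a j / ‖y i - y j‖ ^ (α + 1)) • (I * (y i - y j))

lemma pointVortexVelocity_const_mul (α : ℝ) (a : ι → ℝ) (w : ℂ) (y : ι → ℂ) (i : ι) :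
    pointVortexVelocity α a (fun j => w * y j) i =
      w / (‖w‖ ^ (α + 1) : ℝ) * pointVortexVelocity α a y i := by
  rw [pointVortexVelocity, pointVortexVelocity, Finset.mul_sum]
  refine Finset.sum_congr rfl fun j _ => ?_
  rw [← mul_sub, norm_mul, Real.mul_rpow (norm_nonneg _) (norm_nonneg _), real_smul, real_smul]
  push_cast
  ring

lemma HasDerivWithinAt.of_pointVortexVelocity_of_self_similar {α : ℝ} {a : ι → ℝ}
    {x : ι → ℝ → ℂ} {z : ℝ → ℂ} {s : Set ℝ} {t : ℝ} {i : ι} (hxi : x i 0 ≠ 0)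
    (hx : ∀ r ∈ s, ∀ j, x j r = z r * x j 0) (ht : t ∈ s)
    (h : HasDerivWithinAt (x i) (pointVortexVelocity α a (x · t) i) s t) :
    HasDerivWithinAt z
      (pointVortexVelocity α a (x · 0) i / x i 0 * z t / (‖z t‖ ^ (α + 1) : ℝ)) s t := by
  have hzx : ∀ r ∈ s, z r = x i r / x i 0 := fun r hr => by
    rw [hx r hr, mul_div_cancel_right₀ _ hxi]
  refine ((h.div_const (x i 0)).congr_of_mem hzx ht).congr_deriv ?_
  rw [show (x · t) = fun j => z t * x j 0 from funext (hx t ht), pointVortexVelocity_const_mul]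
  ring

end PointVortex

section Collapse

variable {z : ℝ → ℂ} {c : ℂ} {p T : ℝ}

lemma norm_rpow_eq_one_add_mul (hz0 : z 0 = 1) (hzne : ∀ t ∈ Ico 0 T, z t ≠ 0)
    (hz : ∀ t ∈ Ico 0 T, HasDerivWithinAt z (c * z t / (‖z t‖ ^ p : ℝ)) (Ico 0 T) t) :
    ∀ t ∈ Ico 0 T, ‖z t‖ ^ p = 1 + p * c.re * t := by
  have hconst := eq_of_hasDerivWithinAt_zero_Ico (g := fun t => ‖z t‖ ^ p - p * c.re * t)
    fun t ht => (((hz t ht).norm_rpow_of_eq_mul_div (hzne t ht)).sub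
      ((hasDerivWithinAt_id t _).const_mul (p * c.re))).congr_deriv (by ring)
  intro t ht
  linarith [hconst t ht, show ‖z 0‖ ^ p = 1 by simp [hz0]]

lemma mul_eq_neg_one_of_rpow_eq_one_add_mul {f : ℝ → ℝ} {k : ℝ} (hp : 0 < p) (hT : 0 < T)
    (hfcont : ContinuousOn f (Icc 0 T)) (hfT : f T = 0)
    (hf : ∀ t ∈ Ico 0 T, f t ^ p = 1 + k * t) :
    k * T = -1 := by
  have heq := Set.EqOn.of_subset_closure hf (hfcont.rpow_const fun _ _ => Or.inr hp.le)
    (by fun_prop) Ico_subset_Icc_self (closure_Ico hT.ne).ge (right_mem_Icc.2 hT.le)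
  simp only [hfT, Real.zero_rpow hp.ne'] at heq
  linarith

lemma eq_cexp_mul_log_of_norm_rpow (hT : 0 < T)
    (hnorm : ∀ t ∈ Ico 0 T, ‖z t‖ ^ p = (T - t) / T) (hz0 : z 0 = 1)
    (hz : ∀ t ∈ Ico 0 T, HasDerivWithinAt z (c * z t / (‖z t‖ ^ p : ℝ)) (Ico 0 T) t) :
    ∀ t ∈ Ico 0 T, z t = exp (-(c * T) * Real.log ((T - t) / T)) := by
  have hlog : ∀ t ∈ Ico 0 T, HasDerivWithinAt (fun s => Real.log ((T - s) / T))
      (-1 / T / ((T - t) / T)) (Ico 0 T) t := fun t ht =>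
    (((hasDerivWithinAt_id t _).const_sub T).div_const T).log
      (div_pos (sub_pos.2 ht.2) hT).ne'
  have hsol := eq_mul_cexp_of_hasDerivWithinAt_mul
    (K := fun s => -(c * T) * Real.log ((T - s) / T)) (z := z)
    (fun t ht => (hlog t ht).ofReal_comp.const_mul _) fun t ht => by
      convert hz t ht using 1
      rw [hnorm t ht]
      have : T - t ≠ 0 := (sub_pos.2 ht.2).ne'
      push_cast
      field_simp
  intro t ht
  simpa [hz0, hT.ne'] using hsol t ht

end Collapse

lemma cexp_neg_mul_mul_eq_exp_div_mul_cexp {c : ℂ} {p T L : ℝ} (hp : p ≠ 0) (hT : T ≠ 0)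
    (hc : p * c.re * T = -1) :
    exp (-(c * T) * L) = (Real.exp (L / p) : ℂ) * exp (-I * c.im * T * L) := by
  have hre : c.re = -1 / (p * T) := by field_simp; linarith
  rw [ofReal_exp, ← exp_add]
  congr 1
  have hp' : (p : ℂ) ≠ 0 := ofReal_ne_zero.2 hp
  have hT' : (T : ℂ) ≠ 0 := ofReal_ne_zero.2 hT
  conv_lhs => rw [← re_add_im c, hre]
  push_cast
  field_simp
  ring

theorem self_similar_collapse_explicit_form_general (N : ℕ) (hN : 2 ≤ N)
    (α : ℝ) (hα : 0 < α)
    (a : Fin N → ℝ) (T : ℝ) (hT : 0 < T)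
    (x : Fin N → ℝ → ℂ)
    (hsep : ∀ i j, i ≠ j → ∀ t ∈ Set.Ico (0:ℝ) T, x i t ≠ x j t)
    (hode : ∀ i, ∀ t ∈ Set.Ico (0:ℝ) T,
      HasDerivWithinAt (x i)
        (∑ j ∈ Finset.univ.filter (fun j => j ≠ i),
          (a j / ‖x i t - x j t‖ ^ (α + 1)) • (Complex.I * (x i t - x j t)))
        (Set.Ico (0:ℝ) T) t)
    (f θ : ℝ → ℝ)
    (hfcont : ContinuousOn f (Set.Icc 0 T))
    (hfT : f T = 0)
    (hfpos : ∀ t ∈ Set.Ico (0:ℝ) T, 0 < f t)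
    (hss : ∀ j, ∀ t ∈ Set.Ico (0:ℝ) T,
      x j t = (f t : ℂ) * Complex.exp (Complex.I * (θ t : ℂ)) * x j 0) :
    (∀ t ∈ Set.Ico (0:ℝ) T, f t = ((T - t) / T) ^ (1 / (α + 1))) ∧
    ∃ D : ℝ, ∀ j, ∀ t ∈ Set.Ico (0:ℝ) T,
      x j t = x j 0 * ((((T - t) / T) ^ (1 / (α + 1)) : ℝ) : ℂ) *
        Complex.exp (-Complex.I * (D : ℂ) * (T : ℂ) * ((Real.log ((T - t) / T) : ℝ) : ℂ)) := by
  have h0 : (0 : ℝ) ∈ Ico 0 T := left_mem_Ico.2 hT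
  obtain ⟨i, hxi⟩ : ∃ i, x i 0 ≠ 0 := by
    by_contra! h
    exact hsep ⟨0, by omega⟩ ⟨1, by omega⟩ (by simp [Fin.ext_iff]) 0 h0 (by rw [h, h])
  set z : ℝ → ℂ := fun t => f t * exp (I * θ t)
  set c := pointVortexVelocity α a (x · 0) i / x i 0
  have hx : ∀ t ∈ Ico 0 T, ∀ j, x j t = z t * x j 0 := fun t ht j => hss j t ht
  have hz : ∀ t ∈ Ico 0 T, HasDerivWithinAt z (c * z t / (‖z t‖ ^ (α + 1) : ℝ)) (Ico 0 T) t :=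
    fun t ht => (hode i t ht).of_pointVortexVelocity_of_self_similar hxi hx ht
  have hnorm : ∀ t ∈ Ico 0 T, ‖z t‖ = f t := fun t ht => by
    simp [z, norm_exp_I_mul_ofReal, (hfpos t ht).le]
  have hz0 : z 0 = 1 := (mul_eq_right₀ hxi).1 (hx 0 h0 i).symm
  have hzne : ∀ t ∈ Ico 0 T, z t ≠ 0 := fun t ht => norm_pos_iff.1 (hnorm t ht ▸ hfpos t ht)
  have hlin := norm_rpow_eq_one_add_mul hz0 hzne hz
  have hc := mul_eq_neg_one_of_rpow_eq_one_add_mul (by linarith) hT hfcont hfT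
    fun t ht => hnorm t ht ▸ hlin t ht
  have hprofile : ∀ t ∈ Ico 0 T, ‖z t‖ ^ (α + 1) = (T - t) / T := fun t ht => by
    rw [hlin t ht, eq_div_iff hT.ne']
    linear_combination t * hc
  refine ⟨fun t ht => ?_, c.im, fun j t ht => ?_⟩
  · rw [← hnorm t ht, ← hprofile t ht, one_div, Real.rpow_rpow_inv (norm_nonneg _) (by positivity)]
  · rw [hx t ht j, eq_cexp_mul_log_of_norm_rpow hT hprofile hz0 hz t ht,
      cexp_neg_mul_mul_eq_exp_div_mul_cexp (by positivity) hT.ne' hc,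
      Real.rpow_def_of_pos (div_pos (sub_pos.2 ht.2) hT), div_eq_mul_one_div]
    ring

/-- **Explicit form of self-similar collapsing trajectories.**
Identifying `ℝ²` with `ℂ` (so `v^⊥ = I * v`), let `α > 0`, `N ≥ 2`, let `a i` be nonzero
intensities, and let `(x₁,…,x_N)` be a solution of the `α`-point-vortex system on `[0,T)` that
is a self-similar collapse at time `T` with scaling factor `f` and rotation angle `θ`. Then
`f t = ((T − t)/T)^{1/(α+1)}` on `[0,T)` and there exists `D ∈ ℝ` such that
`x j t = x j 0 · ((T − t)/T)^{1/(α+1)} · exp(−i D T ln((T − t)/T))` for all `j` and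
`t ∈ [0,T)`. -/
theorem self_similar_collapse_explicit_form (N : ℕ) (hN : 2 ≤ N)
    (α : ℝ) (hα : 0 < α)
    (a : Fin N → ℝ) (ha : ∀ i, a i ≠ 0) (T : ℝ) (hT : 0 < T)
    (x : Fin N → ℝ → ℂ)
    (hsep : ∀ i j, i ≠ j → ∀ t ∈ Set.Ico (0:ℝ) T, x i t ≠ x j t)
    (hode : ∀ i, ∀ t ∈ Set.Ico (0:ℝ) T,
      HasDerivWithinAt (x i)
        (∑ j ∈ Finset.univ.filter (fun j => j ≠ i),
          (a j / ‖x i t - x j t‖ ^ (α + 1)) • (Complex.I * (x i t - x j t)))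
        (Set.Ico (0:ℝ) T) t)
    (f θ : ℝ → ℝ)
    (hfcont : ContinuousOn f (Set.Icc 0 T)) (hθcont : ContinuousOn θ (Set.Ico 0 T))
    (hfnn : ∀ t ∈ Set.Icc (0:ℝ) T, 0 ≤ f t)
    (hf0 : f 0 = 1) (hfT : f T = 0)
    (hfpos : ∀ t ∈ Set.Ico (0:ℝ) T, 0 < f t)
    (hθ0 : θ 0 = 0)
    (hss : ∀ j, ∀ t ∈ Set.Ico (0:ℝ) T,
      x j t = (f t : ℂ) * Complex.exp (Complex.I * (θ t : ℂ)) * x j 0) :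
    (∀ t ∈ Set.Ico (0:ℝ) T, f t = ((T - t) / T) ^ (1 / (α + 1))) ∧
    ∃ D : ℝ, ∀ j, ∀ t ∈ Set.Ico (0:ℝ) T,
      x j t = x j 0 * ((((T - t) / T) ^ (1 / (α + 1)) : ℝ) : ℂ) *
        Complex.exp (-Complex.I * (D : ℂ) * (T : ℂ) * ((Real.log ((T - t) / T) : ℝ) : ℂ)) :=
  self_similar_collapse_explicit_form_general N hN α hα a T hT x hsep hode f θ hfcont hfT hfpos hss
end

section
/- (Existence of an admissible aspect ratio for the three-vortex self-similar collapse) For every α > 0 there exists λ ∈ (0,1) such that (1 + λ²)^{(1−α)/2} · (1 − (1 + λ²)^{(α+1)/2}) / λ² = 1 − λ^{−(α+1)}. -/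
open Set

/-- Bernoulli-type upper bound via MVT: for `p ≥ 0` and `0 < x ≤ 1`,
`(1+x)^p - 1 ≤ p * 2^p * x`. -/
lemma rpow_one_add_sub_one_le (p : ℝ) (hp : 0 ≤ p) (x : ℝ) (hx0 : 0 < x) (hx1 : x ≤ 1) :
    (1 + x) ^ p - 1 ≤ p * 2 ^ p * x := by
  obtain ⟨c, hc, hceq⟩ := exists_hasDerivAt_eq_slope (fun t => (1 + t) ^ p)
      (fun t => 1 * p * (1 + t) ^ (p - 1)) hx0
      (by
        apply ContinuousOn.rpow_const (by fun_prop)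
        intro t ht
        exact Or.inl (by nlinarith [ht.1]))
      (by
        intro t ht
        exact (HasDerivAt.const_add 1 (hasDerivAt_id t)).rpow_const
          (Or.inl (by intro h; simp only [id_eq] at h; nlinarith [ht.1])))
  have h1c : (0:ℝ) < c := hc.1
  have hc1 : c < x := hc.2
  have hbase : (1:ℝ) ≤ 1 + c := by linarith
  have hbase2 : 1 + c ≤ 2 := by linarith
  have hder : 1 * p * (1 + c) ^ (p - 1) ≤ p * 2 ^ p := by
    rcases le_or_gt 1 p with h1p | h1p
    · have : (1 + c) ^ (p - 1) ≤ 2 ^ (p - 1) :=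
        Real.rpow_le_rpow (by linarith) hbase2 (by linarith)
      have h2 : (2:ℝ) ^ (p - 1) ≤ 2 ^ p :=
        Real.rpow_le_rpow_of_exponent_le one_le_two (by linarith)
      nlinarith
    · have h1 : (1 + c) ^ (p - 1) ≤ 1 :=
        Real.rpow_le_one_of_one_le_of_nonpos hbase (by linarith)
      have h2 : (1:ℝ) ≤ 2 ^ p := Real.one_le_rpow one_le_two hp
      nlinarith
  have hslope : ((1 + x) ^ p - (1 + 0) ^ p) / (x - 0) ≤ p * 2 ^ p := by
    rw [← hceq]; exact hder
  simp only [add_zero, Real.one_rpow, sub_zero] at hslope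
  calc (1 + x) ^ p - 1 = ((1 + x) ^ p - 1) / x * x := by field_simp
    _ ≤ p * 2 ^ p * x := by
        apply mul_le_mul_of_nonneg_right hslope hx0.le

/-- **Existence of an admissible aspect ratio for the three-vortex self-similar collapse.**
For every `α > 0` there exists `λ ∈ (0,1)` such that
`(1 + λ²)^{(1−α)/2} · (1 − (1 + λ²)^{(α+1)/2}) / λ² = 1 − λ^{−(α+1)}`,
where the powers with real exponents are real powers. -/
theorem exists_aspect_ratio (α : ℝ) (hα : 0 < α) :
    ∃ lam : ℝ, lam ∈ Set.Ioo (0:ℝ) 1 ∧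
      (1 + lam ^ 2) ^ ((1 - α) / 2) * (1 - (1 + lam ^ 2) ^ ((α + 1) / 2)) / lam ^ 2
        = 1 - lam ^ (-(α + 1)) := by
  set p : ℝ := (α + 1) / 2 with hp_def
  set q : ℝ := (1 - α) / 2 with hq_def
  have hp_pos : 0 < p := by positivity
  set K : ℝ := 2 * (p * 2 ^ p) with hK_def
  have hK_pos : 0 < K := by
    have : (0:ℝ) < 2 ^ p := Real.rpow_pos_of_pos two_pos p
    positivity
  set a : ℝ := (2 + K) ^ (-(α + 1)⁻¹) with ha_def
  have h2K : (1:ℝ) < 2 + K := by linarith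
  have ha_pos : 0 < a := Real.rpow_pos_of_pos (by linarith) _
  have ha_lt1 : a < 1 := Real.rpow_lt_one_of_one_lt_of_neg h2K (by
    rw [neg_lt, neg_zero]; positivity)
  have ha_key : a ^ (-(α + 1)) = 2 + K := by
    rw [ha_def, ← Real.rpow_mul (by linarith : (0:ℝ) ≤ 2 + K)]
    rw [show (-(α + 1)⁻¹) * (-(α + 1)) = (α + 1)⁻¹ * (α + 1) by ring,
      inv_mul_cancel₀ (by linarith), Real.rpow_one]
  set f : ℝ → ℝ := fun l =>
    (1 + l ^ 2) ^ q * (1 - (1 + l ^ 2) ^ p) / l ^ 2 - (1 - l ^ (-(α + 1))) with hf_def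
  -- continuity on [a,1]
  have hcont : ContinuousOn f (Icc a 1) := by
    have hne : ∀ l ∈ Icc a 1, (1 + l ^ 2 : ℝ) ≠ 0 := by
      intro l hl; nlinarith [sq_nonneg l]
    have hlne : ∀ l ∈ Icc a 1, l ≠ 0 := by
      intro l hl; have := hl.1; intro h; rw [h] at this; linarith
    apply ContinuousOn.sub
    · apply ContinuousOn.div
      · exact ContinuousOn.mul
          (ContinuousOn.rpow_const (by fun_prop) (fun l hl => Or.inl (hne l hl)))
          (ContinuousOn.sub continuousOn_const
            (ContinuousOn.rpow_const (by fun_prop) (fun l hl => Or.inl (hne l hl))))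
      · fun_prop
      · intro l hl; exact pow_ne_zero 2 (hlne l hl)
    · exact ContinuousOn.sub continuousOn_const
        (ContinuousOn.rpow_const continuousOn_id (fun l hl => Or.inl (hlne l hl)))
  -- f 1 < 0
  have hf1 : f 1 < 0 := by
    have h2p : (1:ℝ) < 2 ^ p := by
      rw [Real.one_lt_rpow_iff_of_pos two_pos]; left; exact ⟨one_lt_two, hp_pos⟩
    have h2q : (0:ℝ) < 2 ^ q := Real.rpow_pos_of_pos two_pos q
    have : f 1 = (2:ℝ) ^ q * (1 - 2 ^ p) := by
      simp only [hf_def, one_pow, Real.one_rpow]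
      norm_num
    rw [this]
    exact mul_neg_of_pos_of_neg h2q (by linarith)
  -- f a > 0
  have hfa : 0 < f a := by
    have ha2_pos : 0 < a ^ 2 := by positivity
    have ha2_le1 : a ^ 2 ≤ 1 := by nlinarith
    have hb1 : (1 + a ^ 2) ^ p - 1 ≤ p * 2 ^ p * a ^ 2 :=
      rpow_one_add_sub_one_le p hp_pos.le _ ha2_pos ha2_le1
    have hc1_pos : 0 < (1 + a ^ 2) ^ q := Real.rpow_pos_of_pos (by nlinarith) q
    have hc1_le2 : (1 + a ^ 2) ^ q ≤ 2 := by
      rcases le_or_gt q 0 with hq0 | hq0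
      · have := Real.rpow_le_one_of_one_le_of_nonpos (by nlinarith : (1:ℝ) ≤ 1 + a ^ 2) hq0
        linarith
      · have h1 : (1 + a ^ 2) ^ q ≤ 2 ^ q :=
          Real.rpow_le_rpow (by nlinarith) (by nlinarith) hq0.le
        have hq1 : q ≤ 1 := by rw [hq_def]; linarith
        have h2 : (2:ℝ) ^ q ≤ 2 ^ (1:ℝ) :=
          Real.rpow_le_rpow_of_exponent_le one_le_two hq1
        rw [Real.rpow_one] at h2
        linarith
    -- lower bound for the LHS main term
    have hterm : -K ≤ (1 + a ^ 2) ^ q * (1 - (1 + a ^ 2) ^ p) / a ^ 2 := by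
      rw [le_div_iff₀ ha2_pos]
      have hneg : 1 - (1 + a ^ 2) ^ p ≤ 0 := by
        have : (1:ℝ) ≤ (1 + a ^ 2) ^ p := Real.one_le_rpow (by nlinarith) hp_pos.le
        linarith
      have h1 : (1 + a ^ 2) ^ q * (1 - (1 + a ^ 2) ^ p) ≥ 2 * (1 - (1 + a ^ 2) ^ p) := by
        nlinarith
      nlinarith
    have : f a = (1 + a ^ 2) ^ q * (1 - (1 + a ^ 2) ^ p) / a ^ 2 - 1 + (2 + K) := by
      rw [hf_def]; simp only; rw [ha_key]; ring
    rw [this]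
    linarith
  -- intermediate value theorem
  have hsub : (0:ℝ) ∈ Icc (f 1) (f a) := ⟨hf1.le, hfa.le⟩
  obtain ⟨c, hc, hfc⟩ := intermediate_value_Icc' ha_lt1.le hcont hsub
  refine ⟨c, ⟨lt_of_lt_of_le ha_pos hc.1, lt_of_le_of_ne hc.2 ?_⟩, ?_⟩
  · intro h; rw [h] at hfc; rw [hfc] at hf1; exact lt_irrefl 0 hf1
  · have : f c = 0 := hfc
    rw [hf_def] at this
    simp only at this
    linarith [this]
end
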